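/- arXiv:2512.05798 — 6 statements merged into one kernel-verified Lean document; each statement's English description precedes it below -/
import Mathlib

section
/- For every unimodular constant w (|w| = 1) there exists a bounded linear multiplicative operator T on H^∞ with T(z) = w·1; in particular T is not a composition operator C_φ for any analytic self-map φ of the unit disc. -/
open Complex Set Filter Topology

noncomputable section

/-- Membership in `H^∞`: bounded analytic functions on the unit disc. -/
def MemHinf (f : ℂ → ℂ) : Prop :=
  DifferentiableOn ℂ f (Metric.ball 0 1) ∧
  ∃ M : ℝ, ∀ z ∈ Metric.ball (0:ℂ) 1, ‖f z‖ ≤ M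

/-- The supremum norm on `H^∞`. -/
def hinfNorm (f : ℂ → ℂ) : ℝ :=
  sSup ((fun z => ‖f z‖) '' Metric.ball 0 1)

/-- For every unimodular constant `w` there exists a bounded linear
multiplicative operator `T` on `H^∞` with `T z = w·1`; in particular `T` is not a
composition operator. -/
theorem exists_multiplicative_not_composition_on_Hinf
    (w : ℂ) (hw : ‖w‖ = 1) :
    ∃ T : (ℂ → ℂ) → (ℂ → ℂ),
      (∀ f, MemHinf f → MemHinf (T f)) ∧
      (∀ f g, MemHinf f → MemHinf g → T (f + g) = T f + T g) ∧
      (∀ (c : ℂ) f, MemHinf f → T (c • f) = c • T f) ∧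
      (∃ C : ℝ, ∀ f, MemHinf f → hinfNorm (T f) ≤ C * hinfNorm f) ∧
      (∀ f g, MemHinf f → MemHinf g → T (f * g) = T f * T g) ∧
      (Set.EqOn (T (fun z => z)) (fun _ => w) (Metric.ball (0:ℂ) 1)) ∧
      (∀ φ : ℂ → ℂ, DifferentiableOn ℂ φ (Metric.ball 0 1) →
        Set.MapsTo φ (Metric.ball 0 1) (Metric.ball 0 1) →
        ¬ (∀ f, MemHinf f → Set.EqOn (T f) (f ∘ φ) (Metric.ball (0:ℂ) 1))) := by
  classical
  set u : Ultrafilter ℝ := Ultrafilter.of (𝓝[<] (1:ℝ)) with hu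
  have hu_le : (u : Filter ℝ) ≤ 𝓝[<] (1:ℝ) := Ultrafilter.of_le _
  set F : (ℂ → ℂ) → ℝ → ℂ := fun f t => f ((t : ℂ) * w) with hF
  set φ : (ℂ → ℂ) → ℂ := fun f => lim (Filter.map (F f) (u : Filter ℝ)) with hφ
  have hIoo : ∀ᶠ t in (u : Filter ℝ), t ∈ Set.Ioo (0:ℝ) 1 :=
    hu_le (Ioo_mem_nhdsLT_of_mem (by constructor <;> norm_num))
  have hmem : ∀ t ∈ Set.Ioo (0:ℝ) 1, ((t:ℂ) * w) ∈ Metric.ball (0:ℂ) 1 := by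
    intro t ht
    rw [Metric.mem_ball, dist_zero_right, norm_mul, hw,
      Complex.norm_real, Real.norm_eq_abs, mul_one, abs_of_pos ht.1]
    exact ht.2
  -- any tendsto witness identifies the limit
  have lim_eq : ∀ (f : ℂ → ℂ) (a : ℂ), Tendsto (F f) (u : Filter ℝ) (𝓝 a) → φ f = a := by
    intro f a hfa
    exact tendsto_nhds_unique (le_nhds_lim ⟨a, hfa⟩) hfa
  have key : ∀ f, MemHinf f → Tendsto (F f) (u : Filter ℝ) (𝓝 (φ f)) := by
    rintro f ⟨hd, M, hM⟩
    have hsub : ∀ᶠ t in (u : Filter ℝ), F f t ∈ Metric.closedBall (0:ℂ) (max M 0) := by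
      filter_upwards [hIoo] with t ht
      rw [Metric.mem_closedBall, dist_zero_right]
      exact le_trans (hM _ (hmem t ht)) (le_max_left _ _)
    have hle : ((u.map (F f) : Ultrafilter ℂ) : Filter ℂ) ≤ 𝓟 (Metric.closedBall (0:ℂ) (max M 0)) := by
      rw [Ultrafilter.coe_map, le_principal_iff, mem_map]
      exact hsub
    obtain ⟨a, _, ha⟩ := (isCompact_closedBall (0:ℂ) (max M 0)).ultrafilter_le_nhds
      (u.map (F f)) hle
    rw [Ultrafilter.coe_map] at ha
    exact le_nhds_lim ⟨a, ha⟩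
  have hball_ne : (Metric.ball (0:ℂ) 1).Nonempty := ⟨0, by simp⟩
  have hconst : ∀ c : ℂ, hinfNorm (fun _ => c) = ‖c‖ := by
    intro c
    unfold hinfNorm
    rw [show (fun z => ‖c‖) '' Metric.ball (0:ℂ) 1 = {‖c‖} from
      hball_ne.image_const _, csSup_singleton]
  have hbdd : ∀ f, MemHinf f →
      BddAbove ((fun z => ‖f z‖) '' Metric.ball (0:ℂ) 1) := by
    rintro f ⟨-, M, hM⟩
    exact ⟨M, by rintro y ⟨z, hz, rfl⟩; exact hM z hz⟩
  have habs : ∀ f, MemHinf f → ‖φ f‖ ≤ hinfNorm f := by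
    intro f hf
    have h1 : Tendsto (fun t => ‖F f t‖) (u : Filter ℝ) (𝓝 ‖φ f‖) :=
      (continuous_norm.tendsto _).comp (key f hf)
    refine le_of_tendsto h1 ?_
    filter_upwards [hIoo] with t ht
    exact le_csSup (hbdd f hf) ⟨_, hmem t ht, rfl⟩
  refine ⟨fun f => fun _ => φ f, ?_, ?_, ?_, ⟨1, ?_⟩, ?_, ?_, ?_⟩
  · intro f _
    exact ⟨differentiableOn_const _, ‖φ f‖, fun z _ => le_refl _⟩
  · intro f g hf hg
    have hsum : Tendsto (F (f + g)) (u : Filter ℝ) (𝓝 (φ f + φ g)) := (key f hf).add (key g hg)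
    funext x
    simp only [Pi.add_apply]
    rw [lim_eq _ _ hsum]
  · intro c f hf
    have hs : Tendsto (F (c • f)) (u : Filter ℝ) (𝓝 (c • φ f)) := (key f hf).const_smul c
    funext x
    simp only [Pi.smul_apply]
    rw [lim_eq _ _ hs]
  · intro f hf
    rw [hconst (φ f), one_mul]
    exact habs f hf
  · intro f g hf hg
    have hm : Tendsto (F (f * g)) (u : Filter ℝ) (𝓝 (φ f * φ g)) := (key f hf).mul (key g hg)
    funext x
    simp only [Pi.mul_apply]
    rw [lim_eq _ _ hm]
  · intro z _
    have hid : Tendsto (F (fun z => z)) (u : Filter ℝ) (𝓝 w) := by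
      have hc : Tendsto (fun t : ℝ => ((t:ℂ) * w)) (𝓝 (1:ℝ)) (𝓝 w) := by
        have h := ((Complex.continuous_ofReal.tendsto (1:ℝ)).mul
          (tendsto_const_nhds (x := w)))
        simpa using h
      exact hc.comp (hu_le.trans nhdsWithin_le_nhds)
    exact lim_eq (fun z => z) w hid
  · intro ψ hψd hψm hcomp
    have hid : MemHinf (fun z => z) := by
      refine ⟨differentiableOn_id, 1, fun z hz => ?_⟩
      rw [Metric.mem_ball, dist_zero_right] at hz
      exact le_of_lt hz
    have h0 : (0:ℂ) ∈ Metric.ball (0:ℂ) 1 := by simp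
    have heq := hcomp (fun z => z) hid h0
    have hid2 : Tendsto (F (fun z => z)) (u : Filter ℝ) (𝓝 w) := by
      have hc : Tendsto (fun t : ℝ => ((t:ℂ) * w)) (𝓝 (1:ℝ)) (𝓝 w) := by
        have h := ((Complex.continuous_ofReal.tendsto (1:ℝ)).mul
          (tendsto_const_nhds (x := w)))
        simpa using h
      exact hc.comp (hu_le.trans nhdsWithin_le_nhds)
    have : w = ψ 0 := by
      rw [← lim_eq (fun z => z) w hid2]
      exact heq
    have hlt : ‖ψ 0‖ < 1 := by
      have := hψm h0
      rwa [Metric.mem_ball, dist_zero_right] at this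
    rw [← this, hw] at hlt
    exact lt_irrefl 1 hlt
end
end

section
/- Let T be a nonzero bounded linear multiplicative operator on the disc algebra A(𝔻), and let φ = T(z). Then φ maps 𝔻 into the closed unit disc. Moreover, if φ maps 𝔻 into 𝔻, then T = C_φ; and if φ is a unimodular constant c, then T(f) = f(c)·1 for all f ∈ A(𝔻). -/
open Complex Set

noncomputable section

/-- Membership in the disc algebra `A(𝔻)`: continuous on the closed unit disc,
analytic on the open unit disc. -/
def MemDiscAlgebra (f : ℂ → ℂ) : Prop :=
  ContinuousOn f (Metric.closedBall 0 1) ∧ DifferentiableOn ℂ f (Metric.ball 0 1)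

/-- The supremum norm on the disc algebra. -/
def discAlgNorm (f : ℂ → ℂ) : ℝ :=
  sSup ((fun z => ‖f z‖) '' Metric.closedBall 0 1)

lemma memDA_one : MemDiscAlgebra 1 :=
  ⟨continuousOn_const, differentiableOn_const 1⟩

lemma memDA_const (c : ℂ) : MemDiscAlgebra (fun _ => c) :=
  ⟨continuousOn_const, differentiableOn_const c⟩

lemma memDA_id : MemDiscAlgebra (fun z => z) :=
  ⟨continuousOn_id, differentiableOn_id⟩

lemma MemDiscAlgebra.mul {f g : ℂ → ℂ} (hf : MemDiscAlgebra f) (hg : MemDiscAlgebra g) :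
    MemDiscAlgebra (f * g) :=
  ⟨hf.1.mul hg.1, hf.2.mul hg.2⟩

lemma MemDiscAlgebra.add {f g : ℂ → ℂ} (hf : MemDiscAlgebra f) (hg : MemDiscAlgebra g) :
    MemDiscAlgebra (f + g) :=
  ⟨hf.1.add hg.1, hf.2.add hg.2⟩

lemma MemDiscAlgebra.smul {f : ℂ → ℂ} (c : ℂ) (hf : MemDiscAlgebra f) :
    MemDiscAlgebra (c • f) :=
  ⟨hf.1.const_smul c, hf.2.const_smul c⟩

lemma MemDiscAlgebra.pow {f : ℂ → ℂ} (hf : MemDiscAlgebra f) (n : ℕ) :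
    MemDiscAlgebra (f ^ n) := by
  induction n with
  | zero => simpa using memDA_one
  | succ n ih => rw [pow_succ]; exact ih.mul hf

lemma discAlgNorm_le {f : ℂ → ℂ} {M : ℝ}
    (h : ∀ z ∈ Metric.closedBall (0:ℂ) 1, ‖f z‖ ≤ M) : discAlgNorm f ≤ M := by
  apply csSup_le
  · exact ⟨_, ⟨0, Metric.mem_closedBall_self zero_le_one, rfl⟩⟩
  · rintro x ⟨z, hz, rfl⟩; exact h z hz

lemma le_discAlgNorm {f : ℂ → ℂ} (hf : ContinuousOn f (Metric.closedBall 0 1)) {z : ℂ}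
    (hz : z ∈ Metric.closedBall (0:ℂ) 1) : ‖f z‖ ≤ discAlgNorm f := by
  apply le_csSup
  · exact (isCompact_closedBall _ _).bddAbove_image
      (continuous_norm.comp_continuousOn hf)
  · exact ⟨z, hz, rfl⟩

lemma discAlgNorm_nonneg {f : ℂ → ℂ} (hf : ContinuousOn f (Metric.closedBall 0 1)) :
    0 ≤ discAlgNorm f :=
  le_trans (norm_nonneg _) (le_discAlgNorm hf (Metric.mem_closedBall_self zero_le_one))

/-- For a nonzero bounded linear multiplicative operator `T` on the disc
algebra, `φ = T z` maps `𝔻` into the closed unit disc; if `φ` maps `𝔻` into `𝔻` then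
`T = C_φ`, and if `φ ≡ c` with `|c| = 1` then `T f = f(c)·1`. -/
theorem multiplicative_on_disc_algebra
    (T : (ℂ → ℂ) → (ℂ → ℂ))
    (hTA : ∀ f, MemDiscAlgebra f → MemDiscAlgebra (T f))
    (hadd : ∀ f g, MemDiscAlgebra f → MemDiscAlgebra g → T (f + g) = T f + T g)
    (hsmul : ∀ (c : ℂ) f, MemDiscAlgebra f → T (c • f) = c • T f)
    (hbdd : ∃ C : ℝ, ∀ f, MemDiscAlgebra f → discAlgNorm (T f) ≤ C * discAlgNorm f)
    (hmult : ∀ f g, MemDiscAlgebra f → MemDiscAlgebra g → T (f * g) = T f * T g)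
    (hnz : ∃ f, MemDiscAlgebra f ∧ ∃ z ∈ Metric.ball (0:ℂ) 1, T f z ≠ 0) :
    Set.MapsTo (T (fun z => z)) (Metric.ball 0 1) (Metric.closedBall 0 1) ∧
    (Set.MapsTo (T (fun z => z)) (Metric.ball 0 1) (Metric.ball 0 1) →
      ∀ f, MemDiscAlgebra f →
        Set.EqOn (T f) (f ∘ (T (fun z => z))) (Metric.ball (0:ℂ) 1)) ∧
    (∀ c : ℂ, ‖c‖ = 1 →
      (∀ z ∈ Metric.ball (0:ℂ) 1, T (fun z => z) z = c) →
      ∀ f, MemDiscAlgebra f →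
        Set.EqOn (T f) (fun _ => f c) (Metric.ball (0:ℂ) 1)) := by
  obtain ⟨C, hC⟩ := hbdd
  -- T respects powers
  have hTpow : ∀ f, MemDiscAlgebra f → ∀ n : ℕ, T (f ^ (n+1)) = (T f) ^ (n+1) := by
    intro f hf n
    induction n with
    | zero => rw [pow_one, pow_one]
    | succ n ih =>
      rw [pow_succ, hmult _ f (hf.pow (n+1)) hf, ih, ← pow_succ]
  -- T 1 = 1 on the ball
  have hT1A : MemDiscAlgebra (T 1) := hTA 1 memDA_one
  have hT1sq : ∀ z : ℂ, T 1 z = T 1 z * T 1 z := by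
    intro z
    have h := hmult 1 1 memDA_one memDA_one
    rw [one_mul] at h
    conv_lhs => rw [h]
    rfl
  have key01 : ∀ z : ℂ, T 1 z = 0 ∨ T 1 z = 1 := by
    intro z
    have h : T 1 z * (T 1 z - 1) = 0 := by
      rw [mul_sub, mul_one, ← hT1sq z, sub_self]
    rcases mul_eq_zero.mp h with h0 | h1
    · exact Or.inl h0
    · exact Or.inr (sub_eq_zero.mp h1)
  have hT1 : ∀ z ∈ Metric.ball (0:ℂ) 1, T 1 z = 1 := by
    have hcont : ContinuousOn (T 1) (Metric.ball (0:ℂ) 1) :=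
      hT1A.1.mono Metric.ball_subset_closedBall
    by_cases hex : ∃ z ∈ Metric.ball (0:ℂ) 1, T 1 z ≠ 0
    · obtain ⟨z0, hz0, hz0'⟩ := hex
      have hU : IsOpen (Metric.ball (0:ℂ) 1 ∩ T 1 ⁻¹' {0}ᶜ) :=
        hcont.isOpen_inter_preimage Metric.isOpen_ball isClosed_singleton.isOpen_compl
      have hV : IsOpen (Metric.ball (0:ℂ) 1 ∩ T 1 ⁻¹' {1}ᶜ) :=
        hcont.isOpen_inter_preimage Metric.isOpen_ball isClosed_singleton.isOpen_compl
      have hdisj : Disjoint (Metric.ball (0:ℂ) 1 ∩ T 1 ⁻¹' {0}ᶜ)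
          (Metric.ball (0:ℂ) 1 ∩ T 1 ⁻¹' {1}ᶜ) := by
        rw [Set.disjoint_left]
        rintro z ⟨_, h0⟩ ⟨_, h1⟩
        simp only [Set.mem_preimage, Set.mem_compl_iff, Set.mem_singleton_iff] at h0 h1
        rcases key01 z with h | h
        · exact h0 h
        · exact h1 h
      have hcover : Metric.ball (0:ℂ) 1 ⊆
          (Metric.ball (0:ℂ) 1 ∩ T 1 ⁻¹' {0}ᶜ) ∪ (Metric.ball (0:ℂ) 1 ∩ T 1 ⁻¹' {1}ᶜ) := by
        intro z hz
        rcases key01 z with h | h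
        · exact Or.inr ⟨hz, by simp [h]⟩
        · exact Or.inl ⟨hz, by simp [h]⟩
      have hpre : IsPreconnected (Metric.ball (0:ℂ) 1) := (convex_ball (0:ℂ) 1).isPreconnected
      have hne : (Metric.ball (0:ℂ) 1 ∩ (Metric.ball (0:ℂ) 1 ∩ T 1 ⁻¹' {0}ᶜ)).Nonempty :=
        ⟨z0, hz0, hz0, by simpa using hz0'⟩
      have hsub := hpre.subset_left_of_subset_union hU hV hdisj hcover hne
      intro z hz
      have hz' := hsub hz
      simp only [Set.mem_inter_iff, Set.mem_preimage, Set.mem_compl_iff,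
        Set.mem_singleton_iff] at hz'
      rcases key01 z with h | h
      · exact absurd h hz'.2
      · exact h
    · push_neg at hex
      exfalso
      obtain ⟨f, hfA, z, hz, hfz⟩ := hnz
      have h := hmult f 1 hfA memDA_one
      rw [mul_one] at h
      apply hfz
      have h2 := congrFun h z
      rw [h2, Pi.mul_apply, hex z hz, mul_zero]
  -- constants
  have hTconst : ∀ (b : ℂ), ∀ z ∈ Metric.ball (0:ℂ) 1, T (fun _ => b) z = b := by
    intro b z hz
    have h : (fun _ : ℂ => b) = b • (1 : ℂ → ℂ) := by funext x; simp
    rw [h, hsmul b 1 memDA_one, Pi.smul_apply, hT1 z hz, smul_eq_mul, mul_one]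
  -- C ≥ 1
  have hone : discAlgNorm (1:ℂ→ℂ) ≤ 1 := discAlgNorm_le (by intro z _; simp)
  have honeg : 0 ≤ discAlgNorm (1:ℂ→ℂ) := discAlgNorm_nonneg continuousOn_const
  have h0B : (0:ℂ) ∈ Metric.ball (0:ℂ) 1 := Metric.mem_ball_self one_pos
  have hT1n : (1:ℝ) ≤ discAlgNorm (T 1) := by
    have h := le_discAlgNorm hT1A.1 (Metric.ball_subset_closedBall h0B)
    rwa [hT1 0 h0B, norm_one] at h
  have hC1 : (1:ℝ) ≤ C := by
    have h := hC 1 memDA_one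
    rcases le_or_gt 0 C with hCpos | hCneg
    · nlinarith [mul_le_mul_of_nonneg_left hone hCpos]
    · nlinarith [mul_nonneg (neg_nonneg.mpr (le_of_lt hCneg)) honeg]
  have hC0 : (0:ℝ) ≤ C := le_trans zero_le_one hC1
  -- sup norm of powers
  have hnorm_pow : ∀ f : ℂ → ℂ, ContinuousOn f (Metric.closedBall 0 1) → ∀ n : ℕ,
      discAlgNorm (f ^ n) ≤ (discAlgNorm f) ^ n := by
    intro f hf n
    apply discAlgNorm_le
    intro z hz
    rw [Pi.pow_apply, norm_pow]
    exact pow_le_pow_left₀ (norm_nonneg _) (le_discAlgNorm hf hz) n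
  -- characters are contractive
  have hchar : ∀ f, MemDiscAlgebra f → ∀ w ∈ Metric.closedBall (0:ℂ) 1,
      ‖T f w‖ ≤ discAlgNorm f := by
    intro f hf w hw
    by_contra hlt
    push_neg at hlt
    have hb0 : 0 ≤ discAlgNorm f := discAlgNorm_nonneg hf.1
    have hkey : ∀ n : ℕ, (‖T f w‖) ^ (n+1) ≤ C * (discAlgNorm f) ^ (n+1) := by
      intro n
      have h1 : ‖T (f ^ (n+1)) w‖ ≤ discAlgNorm (T (f ^ (n+1))) :=
        le_discAlgNorm (hTA _ (hf.pow (n+1))).1 hw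
      have h2 := hC _ (hf.pow (n+1))
      have h3 := hnorm_pow f hf.1 (n+1)
      have h4 : ‖T (f^(n+1)) w‖ = (‖T f w‖)^(n+1) := by
        rw [hTpow f hf n, Pi.pow_apply, norm_pow]
      calc (‖T f w‖) ^ (n+1) = ‖T (f^(n+1)) w‖ := h4.symm
        _ ≤ discAlgNorm (T (f ^ (n+1))) := h1
        _ ≤ C * discAlgNorm (f ^ (n+1)) := h2
        _ ≤ C * (discAlgNorm f) ^ (n+1) := mul_le_mul_of_nonneg_left h3 hC0
    rcases eq_or_lt_of_le hb0 with hb | hb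
    · have := hkey 0
      rw [← hb] at this
      norm_num at this
      have := norm_nonneg (T f w)
      rw [‹T f w = 0›, norm_zero] at hlt
      linarith
    · set a := ‖T f w‖
      set b := discAlgNorm f
      have hab : 1 < a / b := (one_lt_div hb).2 hlt
      obtain ⟨n, hn⟩ := pow_unbounded_of_one_lt C hab
      have h5 : (a / b) ^ n ≤ (a / b) ^ (n+1) :=
        pow_le_pow_right₀ (le_of_lt hab) (Nat.le_succ n)
      have h6 : (a / b) ^ (n+1) ≤ C := by
        rw [div_pow, div_le_iff₀ (pow_pos hb _)]
        exact hkey n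
      linarith
  -- Part 1
  have hid_norm : discAlgNorm (fun z : ℂ => z) ≤ 1 := by
    apply discAlgNorm_le
    intro z hz
    show ‖z‖ ≤ 1
    simpa using mem_closedBall_zero_iff.mp hz
  have part1 : Set.MapsTo (T (fun z => z)) (Metric.ball 0 1) (Metric.closedBall 0 1) := by
    intro z hz
    have h := hchar _ memDA_id z (Metric.ball_subset_closedBall hz)
    simp only [Metric.mem_closedBall, dist_zero_right]
    exact le_trans h hid_norm
  refine ⟨part1, ?_, ?_⟩
  · -- Part 2
    intro hm f hf w hw
    have ha : T (fun z => z) w ∈ Metric.ball (0:ℂ) 1 := hm hw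
    set a : ℂ := T (fun z => z) w with ha'
    have haK : Metric.closedBall (0:ℂ) 1 ∈ nhds a :=
      mem_nhds_iff.mpr ⟨Metric.ball 0 1, Metric.ball_subset_closedBall, Metric.isOpen_ball, ha⟩
    have haB : Metric.ball (0:ℂ) 1 ∈ nhds a := Metric.isOpen_ball.mem_nhds ha
    have hfa : DifferentiableAt ℂ f a := hf.2.differentiableAt haB
    have hgA : MemDiscAlgebra (dslope f a) :=
      ⟨(continuousOn_dslope haK).2 ⟨hf.1, hfa⟩, (Complex.differentiableOn_dslope haB).2 hf.2⟩
    have hhA : MemDiscAlgebra (fun z : ℂ => z - a) :=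
      ⟨continuousOn_id.sub continuousOn_const,
       differentiableOn_id.sub (differentiableOn_const _)⟩
    have hdecomp : f = (fun z : ℂ => z - a) * dslope f a + (fun _ => f a) := by
      funext z
      have h := sub_smul_dslope f a z
      simp only [smul_eq_mul] at h
      simp only [Pi.add_apply, Pi.mul_apply]
      linear_combination -h
    have e1 : T f = T ((fun z : ℂ => z - a) * dslope f a) + T (fun _ => f a) := by
      conv_lhs => rw [hdecomp]
      exact hadd _ _ (hhA.mul hgA) (memDA_const _)
    have e2 : T ((fun z : ℂ => z - a) * dslope f a) = T (fun z : ℂ => z - a) * T (dslope f a) :=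
      hmult _ _ hhA hgA
    have e3 : T (fun z : ℂ => z - a) w = 0 := by
      have hdec2 : (fun z : ℂ => z - a) = (fun z : ℂ => z) + (fun _ => -a) := by
        funext z; simp [sub_eq_add_neg]
      rw [hdec2, hadd _ _ memDA_id (memDA_const _), Pi.add_apply, hTconst (-a) w hw, ← ha',
        add_neg_cancel]
    have e4 := congrFun e1 w
    rw [Pi.add_apply, e2, Pi.mul_apply, e3, zero_mul, zero_add, hTconst (f a) w hw] at e4
    show T f w = f (T (fun z => z) w)
    rw [e4, ← ha']
  · -- Part 3
    intro c hc hcphi f hf w hw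
    have hwK : w ∈ Metric.closedBall (0:ℂ) 1 := Metric.ball_subset_closedBall hw
    have hcK : c ∈ Metric.closedBall (0:ℂ) 1 := by
      rw [Metric.mem_closedBall, Complex.dist_eq, sub_zero, hc]
    set F : ℂ → ℂ := fun z => f z - f c with hF
    have hFA : MemDiscAlgebra F :=
      ⟨hf.1.sub continuousOn_const, hf.2.sub (differentiableOn_const _)⟩
    set h : ℂ → ℂ := fun z => (1 + (starRingEnd ℂ) c * z) / 2 with hh
    have hhA : MemDiscAlgebra h :=
      ⟨(continuousOn_const.add (continuousOn_const.mul continuousOn_id)).div_const _,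
       ((differentiableOn_const _).add
         ((differentiableOn_const _).mul differentiableOn_id)).div_const _⟩
    have hcc : (starRingEnd ℂ) c * c = 1 := by
      rw [mul_comm, Complex.mul_conj]
      norm_cast
      rw [Complex.normSq_eq_norm_sq, hc, one_pow]
    have hThw : T h w = 1 := by
      have hdec : h = (2⁻¹ : ℂ) • ((1 : ℂ → ℂ) + ((starRingEnd ℂ) c) • (fun z : ℂ => z)) := by
        funext z
        simp only [hh, Pi.smul_apply, Pi.add_apply, Pi.one_apply, smul_eq_mul]
        ring
      rw [hdec, hsmul _ _ (memDA_one.add (MemDiscAlgebra.smul _ memDA_id)),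
        Pi.smul_apply, hadd _ _ memDA_one (MemDiscAlgebra.smul _ memDA_id),
        Pi.add_apply, hsmul _ _ memDA_id, Pi.smul_apply, smul_eq_mul, smul_eq_mul,
        hT1 w hw, hcphi w hw, hcc]
      norm_num
    have habs_h : ∀ z : ℂ,
        ‖h z‖ = ‖1 + (starRingEnd ℂ) c * z‖ / 2 := by
      intro z
      simp only [hh, norm_div, Complex.norm_two]
    have hhle : ∀ z ∈ Metric.closedBall (0:ℂ) 1, ‖h z‖ ≤ 1 := by
      intro z hz
      have hz1 : ‖z‖ ≤ 1 := by simpa using mem_closedBall_zero_iff.mp hz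
      have h2 : ‖1 + (starRingEnd ℂ) c * z‖ ≤ 2 := by
        calc ‖1 + (starRingEnd ℂ) c * z‖
            ≤ ‖1‖ + ‖(starRingEnd ℂ) c * z‖ := norm_add_le _ _
          _ ≤ 2 := by rw [norm_one, norm_mul, Complex.norm_conj, hc, one_mul]; linarith
      rw [habs_h z]; linarith
    have hhlt : ∀ z ∈ Metric.closedBall (0:ℂ) 1, z ≠ c → ‖h z‖ < 1 := by
      intro z hz hzc
      set u := (starRingEnd ℂ) c * z with hu
      have hu1 : ‖u‖ ≤ 1 := by
        rw [hu, norm_mul, Complex.norm_conj, hc, one_mul]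
        simpa using mem_closedBall_zero_iff.mp hz
      have hune : u ≠ 1 := by
        intro h1
        apply hzc
        have h2 : c * u = c := by rw [h1, mul_one]
        rw [hu, ← mul_assoc, mul_comm c ((starRingEnd ℂ) c), hcc, one_mul] at h2
        exact h2
      have hsq2 : Complex.normSq u ≤ 1 := by
        rw [← Complex.sq_norm]; nlinarith [norm_nonneg u]
      have hnsq := Complex.normSq_apply u
      have hre : u.re < 1 := by
        rcases lt_or_eq_of_le (le_trans (Complex.re_le_norm u) hu1) with h' | h'
        · exact h'
        · exfalso
          apply hune
          have him0 : u.im = 0 := by nlinarith [mul_self_nonneg u.im]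
          exact Complex.ext (by simp [h']) (by simp [him0])
      have habs2 : ‖1 + u‖ < 2 := by
        have h1 : (‖1 + u‖)^2 < 2^2 := by
          rw [Complex.sq_norm, Complex.normSq_apply]
          simp only [Complex.add_re, Complex.one_re, Complex.add_im, Complex.one_im, zero_add]
          nlinarith
        exact lt_of_pow_lt_pow_left₀ 2 (by norm_num) h1
      rw [habs_h z, ← hu]; linarith
    have hfd : f = F + (fun _ => f c) := by
      funext z; simp [hF]
    have eTf : T f w = T F w + f c := by
      conv_lhs => rw [hfd]
      rw [hadd _ _ hFA (memDA_const _), Pi.add_apply, hTconst (f c) w hw]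
    have hTFirr : ∀ n : ℕ, T (F * h ^ n) w = T F w := by
      intro n
      induction n with
      | zero => rw [pow_zero, mul_one]
      | succ n ih =>
        rw [pow_succ, ← mul_assoc, hmult _ _ (hFA.mul (hhA.pow n)) hhA, Pi.mul_apply, ih,
          hThw, mul_one]
    have hest : ∀ ε : ℝ, 0 < ε → ‖T F w‖ ≤ ε := by
      intro ε hε
      have hFc : F c = 0 := by simp [hF]
      have hcw : ContinuousWithinAt F (Metric.closedBall 0 1) c := hFA.1 c hcK
      rw [Metric.continuousWithinAt_iff] at hcw
      obtain ⟨δ, hδ0, hδ⟩ := hcw ε hε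
      set M := discAlgNorm F with hM
      have hM0 : 0 ≤ M := discAlgNorm_nonneg hFA.1
      set S := Metric.closedBall (0:ℂ) 1 \ Metric.ball c δ with hS
      rcases Set.eq_empty_or_nonempty S with hSe | hSne
      · have hb : discAlgNorm (F * h ^ 0) ≤ ε := by
          rw [pow_zero, mul_one]
          apply discAlgNorm_le
          intro z hz
          have hzb : z ∈ Metric.ball c δ := by
            by_contra hzb
            exact absurd (show z ∈ S from ⟨hz, hzb⟩) (by rw [hSe]; exact notMem_empty z)
          have h1 := hδ hz (Metric.mem_ball.mp hzb)
          rw [hFc, Complex.dist_eq, sub_zero] at h1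
          exact h1.le
        calc ‖T F w‖ = ‖T (F * h ^ 0) w‖ := by rw [hTFirr 0]
          _ ≤ discAlgNorm (F * h ^ 0) := hchar _ (hFA.mul (hhA.pow 0)) w hwK
          _ ≤ ε := hb
      · obtain ⟨z0, hz0S, hmax⟩ :=
          ((isCompact_closedBall (0:ℂ) 1).diff Metric.isOpen_ball).exists_isMaxOn hSne
            (continuous_norm.comp_continuousOn (hhA.1.mono Set.diff_subset))
        have hz0K : z0 ∈ Metric.closedBall (0:ℂ) 1 := hz0S.1
        have hz0c : z0 ≠ c := by
          intro he; exact hz0S.2 (by rw [he]; exact Metric.mem_ball_self hδ0)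
        set ρ := ‖h z0‖ with hρ
        have hρ1 : ρ < 1 := hhlt z0 hz0K hz0c
        have hρ0 : 0 ≤ ρ := norm_nonneg _
        obtain ⟨n, hn⟩ : ∃ n : ℕ, ρ ^ n < ε / (M + 1) := by
          have ht := tendsto_pow_atTop_nhds_zero_of_lt_one hρ0 hρ1
          exact (ht.eventually (gt_mem_nhds (show 0 < ε / (M + 1) by positivity))).exists
        have hbound : discAlgNorm (F * h ^ n) ≤ ε := by
          apply discAlgNorm_le
          intro z hz
          rw [Pi.mul_apply, Pi.pow_apply, norm_mul, norm_pow]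
          by_cases hzb : z ∈ Metric.ball c δ
          · have h1 : ‖F z‖ ≤ ε := by
              have h2 := hδ hz (Metric.mem_ball.mp hzb)
              rw [hFc, Complex.dist_eq, sub_zero] at h2
              exact h2.le
            have h2 : (‖h z‖)^n ≤ 1 :=
              pow_le_one₀ (norm_nonneg _) (hhle z hz)
            calc ‖F z‖ * (‖h z‖)^n
                ≤ ε * 1 := mul_le_mul h1 h2 (by positivity) hε.le
              _ = ε := mul_one ε
          · have hzS : z ∈ S := ⟨hz, hzb⟩
            have h1 : ‖F z‖ ≤ M := le_discAlgNorm hFA.1 hz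
            have h3 : (‖h z‖)^n ≤ ρ^n :=
              pow_le_pow_left₀ (norm_nonneg _) (hmax hzS) n
            calc ‖F z‖ * (‖h z‖)^n
                ≤ M * ρ^n := mul_le_mul h1 h3 (by positivity) hM0
              _ ≤ M * (ε / (M + 1)) := mul_le_mul_of_nonneg_left hn.le hM0
              _ ≤ ε := by
                rw [mul_div_assoc', div_le_iff₀ (by positivity)]
                nlinarith
        calc ‖T F w‖ = ‖T (F * h ^ n) w‖ := by rw [hTFirr n]
          _ ≤ discAlgNorm (F * h ^ n) := hchar _ (hFA.mul (hhA.pow n)) w hwK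
          _ ≤ ε := hbound
    have hTF0 : T F w = 0 := by
      have h0 : ‖T F w‖ ≤ 0 := by
        by_contra hpos
        push_neg at hpos
        have := hest (‖T F w‖ / 2) (by linarith)
        linarith
      have h1 := norm_nonneg (T F w)
      exact norm_eq_zero.mp (le_antisymm h0 h1)
    show T f w = f c
    rw [eTf, hTF0, zero_add]
end
end

section
/- Let T be a nonzero bounded almost multiplicative operator on H^p (1 ≤ p < ∞) and φ = T(z). Then the radial boundary values of φ satisfy |φ(e^{iθ})| ≤ 1 for almost every θ, and consequently φ ∈ H^∞ with ‖φ‖_∞ ≤ 1. -/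
open Complex Set Filter MeasureTheory

noncomputable section

/-- Membership in the Hardy space `H^p`. -/
def MemHp (p : ℝ) (f : ℂ → ℂ) : Prop :=
  DifferentiableOn ℂ f (Metric.ball 0 1) ∧
  ∃ M : ℝ, ∀ r : ℝ, 0 ≤ r → r < 1 →
    (∫ θ in (0:ℝ)..(2 * Real.pi), ‖f (r * Complex.exp (θ * Complex.I))‖ ^ p) ≤ M

/-- The `H^p` norm. -/
def hpNorm (p : ℝ) (f : ℂ → ℂ) : ℝ :=
  ⨆ r : Set.Ico (0:ℝ) 1,
    ((1 / (2 * Real.pi)) *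
      ∫ θ in (0:ℝ)..(2 * Real.pi),
        ‖f ((r:ℝ) * Complex.exp (θ * Complex.I))‖ ^ p) ^ (1/p)

lemma memHp_pow (p : ℝ) (hp : 0 ≤ p) (n : ℕ) : MemHp p (fun z => z ^ (n+1)) := by
  constructor
  · exact (differentiable_pow (n+1)).differentiableOn
  · refine ⟨2 * Real.pi, fun r hr0 hr1 => ?_⟩
    have key : ∀ θ : ℝ,
        ‖((r:ℂ) * Complex.exp (θ * Complex.I)) ^ (n+1)‖ ^ p
          = (r ^ (n+1)) ^ p := by
      intro θ
      rw [norm_pow, norm_mul, Complex.norm_exp_ofReal_mul_I, mul_one, Complex.norm_real, Real.norm_eq_abs,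
        _root_.abs_of_nonneg hr0]
    simp only [key]
    rw [intervalIntegral.integral_const, smul_eq_mul, sub_zero]
    have h1 : (r ^ (n+1)) ^ p ≤ 1 :=
      Real.rpow_le_one (pow_nonneg hr0 _) (pow_le_one₀ hr0 hr1.le) hp
    nlinarith [Real.pi_pos]

lemma hpInt_nonneg (p : ℝ) (f : ℂ → ℂ) (r : ℝ) :
    0 ≤ ∫ θ in (0:ℝ)..(2 * Real.pi),
        ‖f (r * Complex.exp (θ * Complex.I))‖ ^ p :=
  intervalIntegral.integral_nonneg (by positivity)
    (fun θ _ => Real.rpow_nonneg (norm_nonneg _) p)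

lemma hpNorm_nonneg (p : ℝ) (f : ℂ → ℂ) : 0 ≤ hpNorm p f :=
  Real.iSup_nonneg fun r => Real.rpow_nonneg
    (mul_nonneg (by positivity) (hpInt_nonneg p f r)) _

instance : Nonempty (Set.Ico (0:ℝ) 1) := ⟨⟨0, by norm_num⟩⟩

lemma hpNorm_pow_le_one (p : ℝ) (hp : 0 < p) (n : ℕ) :
    hpNorm p (fun z => z ^ (n+1)) ≤ 1 := by
  apply ciSup_le
  rintro ⟨r, hr0, hr1⟩
  have key : ∀ θ : ℝ,
      ‖((r:ℂ) * Complex.exp (θ * Complex.I)) ^ (n+1)‖ ^ p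
        = (r ^ (n+1)) ^ p := by
    intro θ
    rw [norm_pow, norm_mul, Complex.norm_exp_ofReal_mul_I, mul_one, Complex.norm_real, Real.norm_eq_abs,
      _root_.abs_of_nonneg hr0]
  simp only [key]
  rw [intervalIntegral.integral_const, smul_eq_mul, sub_zero]
  have h1 : (r ^ (n+1)) ^ p ≤ 1 :=
    Real.rpow_le_one (pow_nonneg hr0 _) (pow_le_one₀ hr0 hr1.le) hp.le
  have h2 : 0 ≤ (r ^ (n+1)) ^ p := Real.rpow_nonneg (pow_nonneg hr0 _) _
  have hπ : (0:ℝ) < Real.pi := Real.pi_pos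
  refine Real.rpow_le_one ?_ ?_ (by positivity)
  · positivity
  · rw [one_div, inv_mul_le_iff₀ (by positivity), mul_one]
    nlinarith

lemma le_hpNorm (p : ℝ) (hp : 0 < p) (f : ℂ → ℂ) (h : MemHp p f)
    (r : ℝ) (hr0 : 0 ≤ r) (hr1 : r < 1) :
    ((1 / (2 * Real.pi)) * ∫ θ in (0:ℝ)..(2 * Real.pi),
        ‖f (r * Complex.exp (θ * Complex.I))‖ ^ p) ^ (1/p) ≤ hpNorm p f := by
  obtain ⟨-, M, hM⟩ := h
  have hbd : BddAbove (Set.range fun s : Set.Ico (0:ℝ) 1 =>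
      ((1 / (2 * Real.pi)) * ∫ θ in (0:ℝ)..(2 * Real.pi),
        ‖f ((s:ℝ) * Complex.exp (θ * Complex.I))‖ ^ p) ^ (1/p)) := by
    refine ⟨((1 / (2 * Real.pi)) * max M 0) ^ (1/p), ?_⟩
    rintro x ⟨⟨s, hs0, hs1⟩, rfl⟩
    apply Real.rpow_le_rpow (mul_nonneg (by positivity) (hpInt_nonneg _ _ _))
      _ (by positivity)
    exact mul_le_mul_of_nonneg_left ((hM s hs0 hs1).trans (le_max_left _ _)) (by positivity)
  exact le_ciSup hbd ⟨r, hr0, hr1⟩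

lemma integral_le_of_hpNorm_le (p : ℝ) (hp0 : 0 < p) (f : ℂ → ℂ) (h : MemHp p f)
    (C' : ℝ) (hC'0 : 0 ≤ C') (hn : hpNorm p f ≤ C')
    (r : ℝ) (hr0 : 0 ≤ r) (hr1 : r < 1) :
    (∫ θ in (0:ℝ)..(2 * Real.pi),
        ‖f (r * Complex.exp (θ * Complex.I))‖ ^ p)
      ≤ 2 * Real.pi * C' ^ p := by
  have hπ : (0:ℝ) < Real.pi := Real.pi_pos
  have h1 := (le_hpNorm p hp0 f h r hr0 hr1).trans hn
  set X := (1 / (2 * Real.pi)) * ∫ θ in (0:ℝ)..(2 * Real.pi),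
      ‖f (r * Complex.exp (θ * Complex.I))‖ ^ p with hXdef
  have hX0 : 0 ≤ X := by
    rw [hXdef]
    exact mul_nonneg (by positivity) (hpInt_nonneg p f r)
  have h2 : X ^ ((1/p) * p) ≤ C' ^ p := by
    rw [Real.rpow_mul hX0]
    exact Real.rpow_le_rpow (Real.rpow_nonneg hX0 _) h1 hp0.le
  rw [one_div, inv_mul_cancel₀ hp0.ne', Real.rpow_one] at h2
  have h3 : (∫ θ in (0:ℝ)..(2 * Real.pi),
      ‖f (r * Complex.exp (θ * Complex.I))‖ ^ p) = 2 * Real.pi * X := by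
    rw [hXdef, ← mul_assoc, mul_one_div_cancel (by positivity), one_mul]
  rw [h3]
  nlinarith


set_option maxHeartbeats 1000000 in
/-- If `T` is a nonzero bounded almost multiplicative operator on `H^p`
(`1 ≤ p < ∞`) and `φ = T z`, then the radial boundary values of `φ` have modulus at
most 1 almost everywhere, and `φ ∈ H^∞` with `‖φ‖_∞ ≤ 1`. -/
theorem boundary_values_of_Tz_bounded
    (p : ℝ) (hp1 : 1 ≤ p)
    (T : (ℂ → ℂ) → (ℂ → ℂ))
    (hTA : ∀ f, MemHp p f → MemHp p (T f))
    (hadd : ∀ f g, MemHp p f → MemHp p g → T (f + g) = T f + T g)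
    (hsmul : ∀ (c : ℂ) f, MemHp p f → T (c • f) = c • T f)
    (hbdd : ∃ C : ℝ, ∀ f, MemHp p f → hpNorm p (T f) ≤ C * hpNorm p f)
    (hmult : ∀ f g, MemHp p f → MemHp p g → MemHp p (f * g) → T (f * g) = T f * T g)
    (hnz : ∃ f, MemHp p f ∧ ∃ z ∈ Metric.ball (0:ℂ) 1, T f z ≠ 0)
    (φ : ℂ → ℂ) (hφ : φ = T (fun z => z)) :
    (∀ᵐ (θ : ℝ) ∂(volume.restrict (Set.Ioc (0:ℝ) (2 * Real.pi))),
      ∀ L : ℂ, Tendsto (fun r : ℝ => φ (r * Complex.exp ((θ:ℂ) * Complex.I)))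
        (nhdsWithin 1 (Set.Iio 1)) (nhds L) → ‖L‖ ≤ 1) ∧
    (DifferentiableOn ℂ φ (Metric.ball 0 1) ∧
      ∀ z ∈ Metric.ball (0:ℂ) 1, ‖φ z‖ ≤ 1) := by
  have hp0 : (0:ℝ) < p := lt_of_lt_of_le one_pos hp1
  have hπ : (0:ℝ) < Real.pi := Real.pi_pos
  obtain ⟨C, hC⟩ := hbdd
  have hC'0 : (0:ℝ) ≤ max C 0 := le_max_right _ _
  have hmem : ∀ n : ℕ, MemHp p (fun z => z ^ (n+1)) := memHp_pow p hp0.le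
  have hmemz : MemHp p (fun z : ℂ => z) := by
    have := hmem 0
    simpa using this
  have hTpow : ∀ n : ℕ, T (fun z => z ^ (n+1)) = fun z => (φ z) ^ (n+1) := by
    intro n
    induction n with
    | zero =>
        have h1 : (fun z : ℂ => z ^ (0+1)) = (fun z : ℂ => z) := by
          funext z; simp
        rw [h1, ← hφ]
        funext z; simp
    | succ n ih =>
        have h1 : (fun z : ℂ => z ^ (n+1+1)) = (fun z : ℂ => z ^ (n+1)) * (fun z : ℂ => z) := by
          funext z; simp [pow_succ]
        rw [h1, hmult _ _ (hmem n) hmemz (h1 ▸ hmem (n+1)), ih, ← hφ]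
        funext z
        simp [pow_succ]
  have hφdiff : DifferentiableOn ℂ φ (Metric.ball 0 1) := by
    rw [hφ]; exact (hTA _ hmemz).1
  have hpow_mem : ∀ n : ℕ, MemHp p (fun z => (φ z) ^ (n+1)) := fun n =>
    (hTpow n) ▸ hTA _ (hmem n)
  have hnorm_pow : ∀ n : ℕ, hpNorm p (fun z => (φ z) ^ (n+1)) ≤ max C 0 := by
    intro n
    calc hpNorm p (fun z => (φ z) ^ (n+1)) = hpNorm p (T (fun z => z ^ (n+1))) := by
          rw [hTpow n]
      _ ≤ C * hpNorm p (fun z => z ^ (n+1)) := hC _ (hmem n)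
      _ ≤ max C 0 * 1 := mul_le_mul (le_max_left _ _) (hpNorm_pow_le_one p hp0 n)
          (hpNorm_nonneg _ _) hC'0
      _ = max C 0 := mul_one _
  have hint : ∀ (n : ℕ) (r : ℝ), 0 ≤ r → r < 1 →
      (∫ θ in (0:ℝ)..(2 * Real.pi),
        ‖(φ ((r:ℂ) * Complex.exp (θ * Complex.I))) ^ (n+1)‖ ^ p)
        ≤ 2 * Real.pi * (max C 0) ^ p := fun n r hr0 hr1 =>
    integral_le_of_hpNorm_le p hp0 _ (hpow_mem n) _ hC'0 (hnorm_pow n) r hr0 hr1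
  -- interior bound
  have hbound : ∀ z ∈ Metric.ball (0:ℂ) 1, ‖φ z‖ ≤ 1 := by
    intro z0 hz0
    by_contra hgt
    push_neg at hgt
    set r0 := ‖z0‖ with hr0def
    have hr1 : r0 < 1 := by
      simpa [Metric.mem_ball, Complex.dist_eq] using hz0
    have hr00 : 0 ≤ r0 := norm_nonneg _
    set θ0 := if z0.arg < 0 then z0.arg + 2*Real.pi else z0.arg with hθ0def
    have harg1 := Complex.neg_pi_lt_arg z0
    have harg2 := Complex.arg_le_pi z0
    have hθ0a : 0 ≤ θ0 := by
      rw [hθ0def]; split <;> [linarith; linarith]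
    have hθ0b : θ0 < 2*Real.pi := by
      rw [hθ0def]; split <;> [linarith; linarith]
    have hz0eq : (↑r0 : ℂ) * Complex.exp (↑θ0 * I) = z0 := by
      rw [hθ0def]
      split
      · push_cast
        rw [add_mul, Complex.exp_add, Complex.exp_two_pi_mul_I, mul_one]
        exact_mod_cast Complex.norm_mul_exp_arg_mul_I z0
      · exact Complex.norm_mul_exp_arg_mul_I z0
    have hmaps : ∀ θ : ℝ, (↑r0 : ℂ) * Complex.exp (↑θ * I) ∈ Metric.ball (0:ℂ) 1 := by
      intro θ
      simp only [Metric.mem_ball, Complex.dist_eq, sub_zero, norm_mul,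
        Complex.norm_exp_ofReal_mul_I, mul_one, Complex.norm_real, Real.norm_eq_abs]
      rwa [_root_.abs_of_nonneg hr00]
    have hcont : Continuous fun θ : ℝ => φ ((r0:ℂ) * Complex.exp (↑θ * I)) := by
      apply hφdiff.continuousOn.comp_continuous
      · exact continuous_const.mul (Complex.continuous_exp.comp
          (Complex.continuous_ofReal.mul continuous_const))
      · exact hmaps
    have hg : Continuous fun θ : ℝ => ‖φ ((r0:ℂ) * Complex.exp (↑θ * I))‖ :=
      continuous_norm.comp hcont
    set ε := ‖φ z0‖ - 1 with hεdef
    have hεpos : 0 < ε := by rw [hεdef]; linarith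
    have hgθ0 : ‖φ ((r0:ℂ) * Complex.exp (↑θ0 * I))‖ = 1 + ε := by
      rw [hz0eq, hεdef]; ring
    obtain ⟨δ, hδpos, hδ⟩ : ∃ δ > 0, ∀ ⦃θ : ℝ⦄, dist θ θ0 < δ →
        1 + ε/2 < ‖φ ((r0:ℂ) * Complex.exp (↑θ * I))‖ := by
      have h1 : ∀ᶠ θ : ℝ in nhds θ0,
          1 + ε/2 < ‖φ ((r0:ℂ) * Complex.exp (↑θ * I))‖ :=
        (hg.continuousAt (x := θ0)).eventually
          (eventually_gt_nhds (show 1 + ε/2 < ‖φ ((r0:ℂ) * Complex.exp (↑θ0 * I))‖ by rw [hgθ0]; linarith))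
      exact Metric.eventually_nhds_iff.mp h1
    have hab : θ0 < min (θ0 + δ/2) (2*Real.pi) := lt_min (by linarith) hθ0b
    set b := min (θ0 + δ/2) (2*Real.pi) with hbdef
    have hb2π : b ≤ 2*Real.pi := min_le_right _ _
    have hba : 0 < b - θ0 := by linarith
    have hεg1 : (1:ℝ) < 1 + ε/2 := by linarith
    have hlow : ∀ n : ℕ, (b - θ0) * (1 + ε/2) ^ (n+1) ≤ 2 * Real.pi * (max C 0) ^ p := by
      intro n
      have hhcont : Continuous fun θ : ℝ =>
          ‖(φ ((r0:ℂ) * Complex.exp (↑θ * I))) ^ (n+1)‖ ^ p := by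
        simp only [norm_pow]
        exact (hg.pow (n+1)).rpow_const (fun θ => Or.inr hp0.le)
      have h1 : (∫ θ in θ0..b,
            ‖(φ ((r0:ℂ) * Complex.exp (↑θ * I))) ^ (n+1)‖ ^ p)
          ≤ ∫ θ in (0:ℝ)..(2*Real.pi),
            ‖(φ ((r0:ℂ) * Complex.exp (↑θ * I))) ^ (n+1)‖ ^ p :=
        intervalIntegral.integral_mono_interval hθ0a hab.le hb2π
          (Filter.Eventually.of_forall fun θ =>
            Real.rpow_nonneg (norm_nonneg _) p)
          (hhcont.intervalIntegrable _ _)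
      have h2 : (b - θ0) * ((1 + ε/2) ^ (n+1)) ^ p ≤ ∫ θ in θ0..b,
          ‖(φ ((r0:ℂ) * Complex.exp (↑θ * I))) ^ (n+1)‖ ^ p := by
        have h3 : (∫ _ in θ0..b, ((1 + ε/2 : ℝ) ^ (n+1)) ^ p) ≤ ∫ θ in θ0..b,
            ‖(φ ((r0:ℂ) * Complex.exp (↑θ * I))) ^ (n+1)‖ ^ p := by
          apply intervalIntegral.integral_mono_on hab.le intervalIntegrable_const
            (hhcont.intervalIntegrable _ _)
          intro θ hθ
          have hd : dist θ θ0 < δ := by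
            rw [Real.dist_eq, _root_.abs_sub_lt_iff]
            have h4 : θ ≤ θ0 + δ/2 := hθ.2.trans (min_le_left _ _)
            constructor <;> [linarith [hθ.1]; linarith [hθ.1]]
          have h5 := hδ hd
          rw [norm_pow]
          apply Real.rpow_le_rpow (by positivity) _ hp0.le
          exact pow_le_pow_left₀ (by linarith) h5.le _
        rwa [intervalIntegral.integral_const, smul_eq_mul] at h3
      have h6 : (1 + ε/2 : ℝ) ^ (n+1) ≤ ((1 + ε/2 : ℝ) ^ (n+1)) ^ p := by
        have h7 : (1:ℝ) ≤ (1 + ε/2) ^ (n+1) := one_le_pow₀ hεg1.le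
        calc (1 + ε/2 : ℝ) ^ (n+1) = ((1 + ε/2 : ℝ) ^ (n+1)) ^ (1:ℝ) :=
              (Real.rpow_one _).symm
          _ ≤ ((1 + ε/2 : ℝ) ^ (n+1)) ^ p := Real.rpow_le_rpow_of_exponent_le h7 hp1
      calc (b - θ0) * (1 + ε/2) ^ (n+1)
          ≤ (b - θ0) * ((1 + ε/2) ^ (n+1)) ^ p :=
            mul_le_mul_of_nonneg_left h6 hba.le
        _ ≤ ∫ θ in θ0..b,
            ‖(φ ((r0:ℂ) * Complex.exp (↑θ * I))) ^ (n+1)‖ ^ p := h2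
        _ ≤ ∫ θ in (0:ℝ)..(2*Real.pi),
            ‖(φ ((r0:ℂ) * Complex.exp (↑θ * I))) ^ (n+1)‖ ^ p := h1
        _ ≤ 2 * Real.pi * (max C 0) ^ p := hint n r0 hr00 hr1
    obtain ⟨n, hn⟩ := pow_unbounded_of_one_lt
      ((2 * Real.pi * (max C 0) ^ p)/(b - θ0)) hεg1
    rw [div_lt_iff₀ hba] at hn
    have h9 : (1 + ε/2 : ℝ) ^ n ≤ (1 + ε/2) ^ (n+1) :=
      pow_le_pow_right₀ hεg1.le (Nat.le_succ n)
    have h10 := hlow n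
    nlinarith
  refine ⟨?_, hφdiff, hbound⟩
  apply Filter.Eventually.of_forall
  intro θ L hL
  haveI : (nhdsWithin (1:ℝ) (Set.Iio 1)).NeBot := nhdsLT_neBot 1
  have habs : Tendsto (fun r : ℝ => ‖φ (r * Complex.exp ((θ:ℂ) * Complex.I))‖)
      (nhdsWithin 1 (Set.Iio 1)) (nhds (‖L‖)) :=
    (continuous_norm.continuousAt).tendsto.comp hL
  apply le_of_tendsto habs
  have h1 : ∀ᶠ r : ℝ in nhdsWithin 1 (Set.Iio 1), 0 < r :=
    Filter.Eventually.filter_mono nhdsWithin_le_nhds (eventually_gt_nhds zero_lt_one)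
  have h2 : ∀ᶠ r : ℝ in nhdsWithin 1 (Set.Iio 1), r < 1 :=
    eventually_mem_nhdsWithin.mono fun r hr => hr
  filter_upwards [h1, h2] with r hr0 hr1
  apply hbound
  simp only [Metric.mem_ball, Complex.dist_eq, sub_zero, norm_mul,
    Complex.norm_exp_ofReal_mul_I, mul_one, Complex.norm_real, Real.norm_eq_abs]
  rwa [_root_.abs_of_nonneg hr0.le]
end
end

section
/- For n ≥ 1 the polynomial p_n(z) = Σ_{k=0}^{n−1} z^{2k+1}/(2k+1) has Bloch norm at most 1, while p_n(1) = Σ_{k=0}^{n−1} 1/(2k+1) → ∞. -/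
open Complex Set Filter

noncomputable section

/-- The Bloch norm. -/
def blochNorm (f : ℂ → ℂ) : ℝ :=
  ‖f 0‖ +
    sSup ((fun z => (1 - ‖z‖ ^ 2) * ‖deriv f z‖) '' Metric.ball 0 1)

/-- The polynomials `p_n(z) = Σ_{k=0}^{n−1} z^{2k+1}/(2k+1)` have Bloch
norm at most 1, while `p_n(1) = Σ_{k=0}^{n−1} 1/(2k+1) → ∞`. -/
theorem bloch_norm_odd_partial_sums (n : ℕ) (hn : 1 ≤ n) :
    blochNorm (fun z => ∑ k ∈ Finset.range n, z ^ (2 * k + 1) / (2 * (k : ℂ) + 1)) ≤ 1 ∧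
    Tendsto (fun m : ℕ => ∑ k ∈ Finset.range m, (1 : ℝ) / (2 * k + 1)) atTop atTop := by
  constructor
  · have hderiv : ∀ z : ℂ,
        deriv (fun z => ∑ k ∈ Finset.range n, z ^ (2 * k + 1) / (2 * (k : ℂ) + 1)) z
          = ∑ k ∈ Finset.range n, z ^ (2 * k) := by
      intro z
      have h : ∀ k ∈ Finset.range n,
          HasDerivAt (fun z : ℂ => z ^ (2 * k + 1) / (2 * (k : ℂ) + 1)) (z ^ (2 * k)) z := by
        intro k _
        have hc : (2 * (k : ℂ) + 1) ≠ 0 := by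
          intro h
          have := congrArg Complex.re h
          push_cast at this
          simp at this
          nlinarith [Nat.cast_nonneg (α := ℝ) k]
        have h1 : HasDerivAt (fun z : ℂ => z ^ (2 * k + 1)) ((2 * k + 1 : ℕ) * z ^ (2 * k)) z := by
          simpa using hasDerivAt_pow (2 * k + 1) z
        have h2 := h1.div_const (2 * (k : ℂ) + 1)
        convert h2 using 1
        push_cast
        · rfl
        · rfl
        push_cast
        rw [eq_div_iff hc]; ring
      exact (HasDerivAt.fun_sum h).deriv
    have hf0 : (∑ k ∈ Finset.range n, (0 : ℂ) ^ (2 * k + 1) / (2 * (k : ℂ) + 1)) = 0 := by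
      apply Finset.sum_eq_zero
      intro k _
      simp [pow_succ]
    rw [blochNorm]
    simp only [hf0, norm_zero, zero_add]
    apply Real.sSup_le
    · rintro x ⟨z, hz, rfl⟩
      simp only [Metric.mem_ball, dist_zero_right] at hz
      simp only [hderiv]
      set r := ‖z‖ with hr
      have hr0 : 0 ≤ r := norm_nonneg z
      have hD : ‖∑ k ∈ Finset.range n, z ^ (2 * k)‖ ≤
          ∑ k ∈ Finset.range n, (r ^ 2) ^ k := by
        refine (norm_sum_le _ _).trans ?_
        apply Finset.sum_le_sum
        intro k _
        rw [norm_pow, pow_mul]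
      have hgeom : (1 - r ^ 2) * ∑ k ∈ Finset.range n, (r ^ 2) ^ k = 1 - (r ^ 2) ^ n := by
        have := geom_sum_mul (r ^ 2) n
        nlinarith [this]
      have h1 : 1 - r ^ 2 ≥ 0 := by nlinarith
      have h2 : (0 : ℝ) ≤ (r ^ 2) ^ n := by positivity
      calc (1 - r ^ 2) * ‖∑ k ∈ Finset.range n, z ^ (2 * k)‖
          ≤ (1 - r ^ 2) * ∑ k ∈ Finset.range n, (r ^ 2) ^ k := by
            exact mul_le_mul_of_nonneg_left hD h1
        _ = 1 - (r ^ 2) ^ n := hgeom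
        _ ≤ 1 := by linarith
    · norm_num
  · have h := Real.tendsto_sum_range_one_div_nat_succ_atTop
    have h2 : Tendsto (fun m : ℕ => (1 / 2 : ℝ) * ∑ i ∈ Finset.range m, (1 / (i + 1) : ℝ))
        atTop atTop := h.const_mul_atTop (by norm_num)
    apply tendsto_atTop_mono _ h2
    intro m
    rw [Finset.mul_sum]
    apply Finset.sum_le_sum
    intro i _
    have hi : (0 : ℝ) < (i : ℝ) + 1 := by positivity
    have : (1 / 2 : ℝ) * (1 / ((i : ℝ) + 1)) = 1 / (2 * i + 2) := by
      field_simp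
    rw [this]
    apply one_div_le_one_div_of_le
    · positivity
    · linarith
end
end

section
/- If f is in the Bloch space and w ∈ 𝔻, then there exists g in the Bloch space with f(z) − f(w) = (z − w)g(z) for all z ∈ 𝔻. -/
open Complex Set

set_option maxHeartbeats 1000000

noncomputable section

/-- Membership in the Bloch space. -/
def MemBloch (f : ℂ → ℂ) : Prop :=
  DifferentiableOn ℂ f (Metric.ball 0 1) ∧
  ∃ M : ℝ, ∀ z ∈ Metric.ball (0:ℂ) 1, (1 - ‖z‖ ^ 2) * ‖deriv f z‖ ≤ M

/-- Growth estimate for Bloch functions along radii. -/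
lemma bloch_growth (f : ℂ → ℂ) (M : ℝ)
    (hd : DifferentiableOn ℂ f (Metric.ball 0 1))
    (hb : ∀ z ∈ Metric.ball (0:ℂ) 1, (1 - ‖z‖ ^ 2) * ‖deriv f z‖ ≤ M)
    (r : ℝ) (hr0 : 0 < r) (hr1 : r < 1) (z : ℂ) (hz : ‖z‖ < 1)
    (hrz : r ≤ ‖z‖) :
    ‖f z - f ((↑(r / ‖z‖)) * z)‖ ≤
      M * (Real.log (1 - r) - Real.log (1 - ‖z‖)) := by
  set ρ : ℝ := ‖z‖ with hρ
  have hρ0 : 0 < ρ := lt_of_lt_of_le hr0 hrz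
  set u : ℂ := (↑(ρ⁻¹) : ℂ) * z with hu
  have hau : ‖u‖ = 1 := by
    rw [hu, norm_mul, Complex.norm_real, Real.norm_eq_abs, abs_of_pos (inv_pos.2 hρ0), ← hρ]
    field_simp
  set c : ℝ → ℂ := fun s => (s : ℂ) * u with hc
  have hcabs : ∀ s : ℝ, 0 ≤ s → ‖c s‖ = s := by
    intro s hs
    rw [hc]; simp [norm_mul, hau, _root_.abs_of_nonneg hs]
  have hcball : ∀ s ∈ Icc r ρ, c s ∈ Metric.ball (0:ℂ) 1 := by
    intro s hs
    rw [Metric.mem_ball, dist_zero_right,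
      hcabs s (le_trans hr0.le hs.1)]
    exact lt_of_le_of_lt hs.2 hz
  have hcderiv : ∀ s : ℝ, HasDerivAt c u s := by
    intro s
    have := (hasDerivAt_id s).smul_const u
    simpa [hc, one_smul, Complex.real_smul] using this
  -- the function along the radius
  set F : ℝ → ℂ := fun s => f (c s) - f (c r) with hF
  have hFc : ContinuousOn F (Icc r ρ) := by
    apply ContinuousOn.sub _ continuousOn_const
    exact hd.continuousOn.comp (Continuous.continuousOn (by continuity)) hcball
  have hF' : ∀ s ∈ Ico r ρ, HasDerivWithinAt F (u • deriv f (c s)) (Ici s) s := by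
    intro s hs
    have hmem : c s ∈ Metric.ball (0:ℂ) 1 := hcball s ⟨hs.1, hs.2.le⟩
    have hfd : HasDerivAt f (deriv f (c s)) (c s) :=
      (hd.differentiableAt (Metric.isOpen_ball.mem_nhds hmem)).hasDerivAt
    have := (HasDerivAt.scomp s hfd (hcderiv s)).sub_const (f (c r))
    exact this.hasDerivWithinAt
  set B : ℝ → ℝ := fun s => M * (Real.log (1 - r) - Real.log (1 - s)) with hB
  have hBc : ContinuousOn B (Icc r ρ) := by
    apply ContinuousOn.mul continuousOn_const
    apply ContinuousOn.sub continuousOn_const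
    apply ContinuousOn.log ((continuous_const.sub continuous_id).continuousOn)
    intro s hs
    have : s < 1 := lt_of_le_of_lt hs.2 hz
    simp only [Pi.sub_apply, id]; intro h; linarith [sub_eq_zero.mp h]
  have hB' : ∀ s ∈ Ico r ρ, HasDerivWithinAt B (M * (1 - s)⁻¹) (Ici s) s := by
    intro s hs
    have hs1 : s < 1 := lt_of_lt_of_le hs.2 hz.le
    have hne : (1 : ℝ) - s ≠ 0 := by linarith
    have hlog : HasDerivAt (fun s : ℝ => Real.log (1 - s)) ((1 - s)⁻¹ * (-1)) s := by
      have hin : HasDerivAt (fun s : ℝ => 1 - s) (-1) s := (hasDerivAt_id s).const_sub 1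
      exact (Real.hasDerivAt_log hne).comp s hin
    have : HasDerivAt B (M * (0 - (1 - s)⁻¹ * (-1))) s := by
      exact ((hasDerivAt_const s (Real.log (1 - r))).sub hlog).const_mul M
    have h2 : M * (0 - (1 - s)⁻¹ * (-1)) = M * (1 - s)⁻¹ := by ring
    rw [h2] at this
    exact this.hasDerivWithinAt
  have hM0 : 0 ≤ M := by
    have := hb 0 (by simp)
    simp at this
    exact le_trans (by positivity) this
  have hbound : ∀ s ∈ Ico r ρ, ‖u • deriv f (c s)‖ ≤ M * (1 - s)⁻¹ := by
    intro s hs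
    have hs0 : 0 < s := lt_of_lt_of_le hr0 hs.1
    have hs1 : s < 1 := lt_of_lt_of_le hs.2 hz.le
    have hmem : c s ∈ Metric.ball (0:ℂ) 1 := hcball s ⟨hs.1, hs.2.le⟩
    have hbz := hb (c s) hmem
    rw [hcabs s hs0.le] at hbz
    have hnorm : ‖u • deriv f (c s)‖ = ‖deriv f (c s)‖ := by
      rw [smul_eq_mul, norm_mul, hau, one_mul]
    rw [hnorm]
    have h1 : 0 < 1 - s := by linarith
    have h2 : (1 : ℝ) - s ≤ 1 - s ^ 2 := by nlinarith
    have h3 : (1 - s) * ‖deriv f (c s)‖ ≤ M := by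
      refine le_trans ?_ hbz
      exact mul_le_mul_of_nonneg_right h2 (norm_nonneg _)
    rw [mul_comm M, ← div_eq_inv_mul]
    rw [le_div_iff₀ h1]
    linarith [h3]
  have key := image_norm_le_of_norm_deriv_right_le_deriv_boundary' hFc hF'
    (by simp [hF, hB]) hBc hB' hbound (right_mem_Icc.2 hrz)
  have hcρ : c ρ = z := by
    show (ρ:ℂ) * ((↑(ρ⁻¹) : ℂ) * z) = z
    rw [← mul_assoc, ← Complex.ofReal_mul, mul_inv_cancel₀ hρ0.ne']
    simp
  have hcr : c r = (↑(r / ρ) : ℂ) * z := by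
    show (r:ℂ) * ((↑(ρ⁻¹) : ℂ) * z) = (↑(r / ρ) : ℂ) * z
    rw [← mul_assoc, ← Complex.ofReal_mul, div_eq_mul_inv]
  have key' : ‖f (c ρ) - f (c r)‖ ≤ M * (Real.log (1 - r) - Real.log (1 - ρ)) := key
  rw [hcρ, hcr] at key'
  simpa using key'

/-- If `f` is in the Bloch space and `w ∈ 𝔻`, then there is `g` in the
Bloch space with `f(z) − f(w) = (z − w)g(z)` on `𝔻`. -/
theorem bloch_factorization (f : ℂ → ℂ) (hf : MemBloch f)
    (w : ℂ) (hw : w ∈ Metric.ball (0:ℂ) 1) :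
    ∃ g : ℂ → ℂ, MemBloch g ∧ ∀ z ∈ Metric.ball (0:ℂ) 1, f z - f w = (z - w) * g z := by
  obtain ⟨hfd, M₀, hM₀⟩ := hf
  set M : ℝ := max M₀ 0 with hM
  have hMnn : 0 ≤ M := le_max_right _ _
  have hb : ∀ z ∈ Metric.ball (0:ℂ) 1,
      (1 - ‖z‖ ^ 2) * ‖deriv f z‖ ≤ M :=
    fun z hz => (hM₀ z hz).trans (le_max_left _ _)
  have hw1 : ‖w‖ < 1 := by
    rwa [Metric.mem_ball, dist_zero_right] at hw
  have hwnn : 0 ≤ ‖w‖ := norm_nonneg w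
  set g : ℂ → ℂ := dslope f w with hg
  have hgd : DifferentiableOn ℂ g (Metric.ball 0 1) :=
    (Complex.differentiableOn_dslope (Metric.isOpen_ball.mem_nhds hw)).mpr hfd
  refine ⟨g, ⟨hgd, ?_⟩, ?_⟩
  · -- the Bloch bound for g
    set r : ℝ := (1 + ‖w‖) / 2 with hr
    have hr0 : 0 < r := by positivity
    have hr1 : r < 1 := by rw [hr]; linarith
    have hwr : ‖w‖ < r := by rw [hr]; linarith
    set δ : ℝ := (1 - ‖w‖) / 2 with hδ
    have hδ0 : 0 < δ := by rw [hδ]; linarith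
    set K : Set ℂ := Metric.closedBall 0 r with hK
    have hKball : K ⊆ Metric.ball (0:ℂ) 1 := by
      rw [hK]
      exact (Metric.closedBall_subset_ball hr1)
    -- bound for deriv g on K
    have hderivg_cont : ContinuousOn (deriv g) (Metric.ball (0:ℂ) 1) :=
      ((hgd.analyticOnNhd Metric.isOpen_ball).deriv).continuousOn
    obtain ⟨C₀, hC₀⟩ := (isCompact_closedBall (0:ℂ) r).exists_bound_of_continuousOn
      (hderivg_cont.mono hKball)
    have hC₀nn : 0 ≤ C₀ := le_trans (norm_nonneg _) (hC₀ 0 (Metric.mem_closedBall_self hr0.le))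
    -- bound for f - f w on K
    obtain ⟨C₂, hC₂⟩ := (isCompact_closedBall (0:ℂ) r).exists_bound_of_continuousOn
      ((hfd.continuousOn.sub continuousOn_const).mono hKball)
    have hC₂nn : 0 ≤ C₂ := by
      refine le_trans (norm_nonneg (f w - f w)) (hC₂ w ?_)
      rw [Metric.mem_closedBall, dist_zero_right]
      exact hwr.le
    refine ⟨max C₀ (M * δ⁻¹ + (2 * M + C₂) * (δ ^ 2)⁻¹), ?_⟩
    intro z hz
    have hz1 : ‖z‖ < 1 := by
      rwa [Metric.mem_ball, dist_zero_right] at hz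
    have hzsq : (0:ℝ) ≤ 1 - ‖z‖ ^ 2 := by
      nlinarith [norm_nonneg z]
    by_cases hcase : ‖z‖ ≤ r
    · -- inside the compact set
      have hzK : z ∈ K := by
        rw [hK, Metric.mem_closedBall, dist_zero_right]
        exact hcase
      refine le_trans ?_ (le_max_left _ _)
      calc (1 - ‖z‖ ^ 2) * ‖deriv g z‖
          ≤ 1 * C₀ := by
            apply mul_le_mul
            · nlinarith [norm_nonneg z]
            · exact hC₀ z hzK
            · exact norm_nonneg _
            · linarith
        _ = C₀ := one_mul _
    · push_neg at hcase
      have hzw : z ≠ w := by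
        intro h; rw [h] at hcase; linarith
      have hδle : δ ≤ ‖z - w‖ := by
        have := norm_sub_norm_le z w
        rw [hδ]; rw [hr] at hcase; linarith
      -- compute deriv g z
      have hev : g =ᶠ[nhds z] fun ζ => (ζ - w)⁻¹ * (f ζ - f w) := by
        filter_upwards [isOpen_compl_singleton.mem_nhds hzw] with ζ hζ
        rw [hg, dslope_of_ne f hζ, slope_def_field]
        rw [div_eq_inv_mul]
      have hfz : HasDerivAt f (deriv f z) z :=
        (hfd.differentiableAt (Metric.isOpen_ball.mem_nhds hz)).hasDerivAt
      have hinv : HasDerivAt (fun ζ : ℂ => (ζ - w)⁻¹)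
          (-1 / (z - w) ^ 2) z := by
        have := ((hasDerivAt_id z).sub_const w).inv (sub_ne_zero.2 hzw)
        exact this
      have hprod : HasDerivAt (fun ζ => (ζ - w)⁻¹ * (f ζ - f w))
          (-1 / (z - w) ^ 2 * (f z - f w) + (z - w)⁻¹ * deriv f z) z :=
        hinv.mul (hfz.sub_const (f w))
      have hderiv_eq : deriv g z =
          -1 / (z - w) ^ 2 * (f z - f w) + (z - w)⁻¹ * deriv f z := by
        rw [hev.deriv_eq]
        exact hprod.deriv
      -- growth bound for |f z - f w|
      have hgrow := bloch_growth f M hfd hb r hr0 hr1 z hz1 hcase.le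
      have hzpos : (0:ℝ) < ‖z‖ := lt_trans hr0 hcase
      have hrq : ‖(↑(r / ‖z‖) : ℂ) * z‖ = r := by
        rw [norm_mul, Complex.norm_real, Real.norm_eq_abs, _root_.abs_of_pos (div_pos hr0 hzpos),
          div_mul_cancel₀ _ hzpos.ne']
      have hrqK : (↑(r / ‖z‖) : ℂ) * z ∈ K := by
        rw [hK, Metric.mem_closedBall, dist_zero_right, hrq]
      have hfw2 : ‖f ((↑(r / ‖z‖) : ℂ) * z) - f w‖ ≤ C₂ := by
        simpa using hC₂ _ hrqK
      set s : ℝ := ‖z‖ with hs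
      have hs1 : s < 1 := hz1
      have hsr : r < s := hcase
      have h1s : 0 < 1 - s := by linarith
      have h1r : 0 < 1 - r := by linarith
      set L : ℝ := Real.log (1 - r) - Real.log (1 - s) with hL
      have hLnn : 0 ≤ L := by
        rw [hL, sub_nonneg]
        exact Real.log_le_log h1s (by linarith)
      have hLbound : (1 - s) * L ≤ 1 := by
        have hdiv : L = Real.log ((1 - r) / (1 - s)) := by
          rw [hL, Real.log_div h1r.ne' h1s.ne']
        have := Real.log_le_sub_one_of_pos (div_pos h1r h1s)
        rw [← hdiv] at this
        have h2 : (1 - s) * L ≤ (1 - s) * ((1 - r) / (1 - s) - 1) :=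
          mul_le_mul_of_nonneg_left this h1s.le
        have h3 : (1 - s) * ((1 - r) / (1 - s) - 1) = (1 - r) - (1 - s) := by
          field_simp
        rw [h3] at h2
        linarith
      have hfzw : ‖f z - f w‖ ≤ M * L + C₂ := by
        calc ‖f z - f w‖
            ≤ ‖f z - f ((↑(r / ‖z‖) : ℂ) * z)‖ +
              ‖f ((↑(r / ‖z‖) : ℂ) * z) - f w‖ := by
              have := norm_add_le (f z - f ((↑(r / ‖z‖) : ℂ) * z))
                (f ((↑(r / ‖z‖) : ℂ) * z) - f w)
              simpa using this
          _ ≤ M * L + C₂ := add_le_add hgrow hfw2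
      have e2 : (1 - s ^ 2) * ‖f z - f w‖ ≤ 2 * M + C₂ := by
        have hsq2 : 1 - s ^ 2 ≤ 2 * (1 - s) := by nlinarith [hr0, hsr]
        have hsq1 : 1 - s ^ 2 ≤ 1 := by nlinarith [hr0, hsr]
        calc (1 - s ^ 2) * ‖f z - f w‖
            ≤ (1 - s ^ 2) * (M * L + C₂) :=
              mul_le_mul_of_nonneg_left hfzw hzsq
          _ = (1 - s ^ 2) * (M * L) + (1 - s ^ 2) * C₂ := by ring
          _ ≤ 2 * (1 - s) * (M * L) + 1 * C₂ := by
              apply add_le_add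
              · exact mul_le_mul_of_nonneg_right hsq2 (by positivity)
              · exact mul_le_mul_of_nonneg_right hsq1 hC₂nn
          _ = 2 * M * ((1 - s) * L) + C₂ := by ring
          _ ≤ 2 * M * 1 + C₂ := by
              apply add_le_add_left
              exact mul_le_mul_of_nonneg_left hLbound (by positivity)
          _ = 2 * M + C₂ := by ring
      have e3 : (1 - s ^ 2) * ‖deriv f z‖ ≤ M := hb z hz
      -- the estimate on deriv g
      have hδ2 : δ ^ 2 ≤ ‖z - w‖ ^ 2 := by nlinarith [norm_nonneg (z - w)]
      have habspos : 0 < ‖z - w‖ := lt_of_lt_of_le hδ0 hδle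
      have e1 : ‖deriv g z‖ ≤
          ‖f z - f w‖ * (δ ^ 2)⁻¹ + ‖deriv f z‖ * δ⁻¹ := by
        rw [hderiv_eq]
        calc ‖-1 / (z - w) ^ 2 * (f z - f w) + (z - w)⁻¹ * deriv f z‖
            ≤ ‖-1 / (z - w) ^ 2 * (f z - f w)‖ +
              ‖(z - w)⁻¹ * deriv f z‖ := norm_add_le _ _
          _ = ‖f z - f w‖ / ‖z - w‖ ^ 2 +
              ‖deriv f z‖ / ‖z - w‖ := by
              rw [show (-1 / (z - w) ^ 2 * (f z - f w)) =
                  -((f z - f w) / (z - w) ^ 2) by ring, norm_neg, norm_div,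
                  norm_pow, norm_mul, norm_inv]
              ring
          _ ≤ ‖f z - f w‖ / δ ^ 2 + ‖deriv f z‖ / δ := by
              apply add_le_add
              · exact div_le_div_of_nonneg_left (norm_nonneg _) (by positivity) hδ2
              · exact div_le_div_of_nonneg_left (norm_nonneg _) hδ0 hδle
          _ = ‖f z - f w‖ * (δ ^ 2)⁻¹ + ‖deriv f z‖ * δ⁻¹ := by
              rw [div_eq_mul_inv, div_eq_mul_inv]
      refine le_trans ?_ (le_max_right _ _)
      calc (1 - ‖z‖ ^ 2) * ‖deriv g z‖
          ≤ (1 - s ^ 2) * (‖f z - f w‖ * (δ ^ 2)⁻¹ +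
            ‖deriv f z‖ * δ⁻¹) := mul_le_mul_of_nonneg_left e1 hzsq
        _ = ((1 - s ^ 2) * ‖f z - f w‖) * (δ ^ 2)⁻¹ +
            ((1 - s ^ 2) * ‖deriv f z‖) * δ⁻¹ := by ring
        _ ≤ (2 * M + C₂) * (δ ^ 2)⁻¹ + M * δ⁻¹ := by
            apply add_le_add
            · exact mul_le_mul_of_nonneg_right e2 (by positivity)
            · exact mul_le_mul_of_nonneg_right e3 (by positivity)
        _ = M * δ⁻¹ + (2 * M + C₂) * (δ ^ 2)⁻¹ := by ring
  · intro z _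
    have := sub_smul_dslope f w z
    rw [smul_eq_mul] at this
    rw [hg, this]
end
end

section
/- Let X be a Banach algebra of analytic functions on 𝔻 under the Duhamel product, containing the identity function z, and let φ be an analytic self-map of 𝔻 such that C_φ is bounded on X. Then C_φ is multiplicative with respect to the Duhamel product (C_φ(f ⊛ g) = C_φ f ⊛ C_φ g for all f, g ∈ X) if and only if φ(z) = az for some constant a with |a| ≤ 1. -/
open Complex Set

noncomputable section

/-- The Duhamel product `(f ⊛ g)(z) = ∫_0^z f'(z−t)g(t) dt + f(0)g(z)`, the integral
taken along the segment from `0` to `z`. -/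
def duhamel (f g : ℂ → ℂ) : ℂ → ℂ := fun z =>
  (z * ∫ s in (0:ℝ)..1, deriv f (z - s * z) * g (s * z)) + f 0 * g z

namespace DuhamelAux

open Metric intervalIntegral Finset

local notation "𝔻" => Metric.ball (0:ℂ) 1

lemma h0D : (0:ℂ) ∈ 𝔻 := mem_ball_self one_pos

/-- The convolution part of the Duhamel product. -/
def conv (f g : ℂ → ℂ) : ℂ → ℂ := fun z =>
  z * ∫ s in (0:ℝ)..1, f (z - s * z) * g (s * z)

lemma duhamel_eq (f g : ℂ → ℂ) (z : ℂ) :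
    duhamel f g z = conv (deriv f) g z + f 0 * g z := rfl

lemma conv_zero (f g : ℂ → ℂ) : conv f g 0 = 0 := by simp [conv]

lemma norm_smul_le' {t : ℝ} (ht : t ∈ Icc (0:ℝ) 1) (x : ℂ) : ‖(t:ℂ) * x‖ ≤ ‖x‖ := by
  rw [norm_mul]
  have h : ‖(t:ℂ)‖ = t := by
    rw [Complex.norm_real, Real.norm_eq_abs, _root_.abs_of_nonneg ht.1]
  rw [h]
  exact mul_le_of_le_one_left (norm_nonneg x) ht.2

lemma norm_sub_smul_le {t : ℝ} (ht : t ∈ Icc (0:ℝ) 1) (x : ℂ) : ‖x - (t:ℂ) * x‖ ≤ ‖x‖ := by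
  have h : x - (t:ℂ) * x = ((1 - t : ℝ) : ℂ) * x := by push_cast; ring
  rw [h]
  exact norm_smul_le' ⟨by linarith [ht.2], by linarith [ht.1]⟩ x

lemma contOn_smul {h : ℂ → ℂ} (hh : ContinuousOn h 𝔻) {x : ℂ} (hx : x ∈ 𝔻) :
    ContinuousOn (fun t : ℝ => h ((t:ℂ) * x)) (Icc (0:ℝ) 1) := by
  apply hh.comp ((Complex.continuous_ofReal.mul continuous_const).continuousOn)
  intro t ht
  rw [mem_ball_zero_iff] at hx ⊢
  exact lt_of_le_of_lt (norm_smul_le' ht x) hx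

lemma contOn_sub_smul {h : ℂ → ℂ} (hh : ContinuousOn h 𝔻) {x : ℂ} (hx : x ∈ 𝔻) :
    ContinuousOn (fun t : ℝ => h (x - (t:ℂ) * x)) (Icc (0:ℝ) 1) := by
  apply hh.comp (Continuous.continuousOn (by continuity))
  intro t ht
  rw [mem_ball_zero_iff] at hx ⊢
  exact lt_of_le_of_lt (norm_sub_smul_le ht x) hx

/-- Key analytic lemma: derivative of the convolution. -/
lemma conv_hasDerivAt {f g : ℂ → ℂ} (hf : AnalyticOnNhd ℂ f 𝔻) (hg : AnalyticOnNhd ℂ g 𝔻)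
    {z₀ : ℂ} (hz₀ : z₀ ∈ 𝔻) :
    HasDerivAt (conv f g) (f 0 * g z₀ + conv (deriv f) g z₀) z₀ := by
  have hf' : AnalyticOnNhd ℂ (deriv f) 𝔻 := hf.deriv
  have hg' : AnalyticOnNhd ℂ (deriv g) 𝔻 := hg.deriv
  have hz₀1 : ‖z₀‖ < 1 := mem_ball_zero_iff.mp hz₀
  set r : ℝ := (1 + ‖z₀‖)/2 with hrdef
  have hr0 : 0 < r := by positivity
  have hr1 : r < 1 := by rw [hrdef]; linarith
  have hz₀r : ‖z₀‖ < r := by rw [hrdef]; linarith [norm_nonneg z₀]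
  have hrD : Metric.closedBall (0:ℂ) r ⊆ 𝔻 := closedBall_subset_ball hr1
  set ε : ℝ := r - ‖z₀‖ with hεdef
  have hε : 0 < ε := by rw [hεdef]; linarith
  have hmem : ∀ x ∈ Metric.ball z₀ ε, ‖x‖ < r := by
    intro x hx
    rw [mem_ball, dist_eq_norm] at hx
    calc ‖x‖ = ‖(x - z₀) + z₀‖ := by ring_nf
    _ ≤ ‖x - z₀‖ + ‖z₀‖ := norm_add_le _ _
    _ < ε + ‖z₀‖ := by linarith
    _ = r := by rw [hεdef]; ring
  have hmemD : ∀ x ∈ Metric.ball z₀ ε, x ∈ 𝔻 := fun x hx =>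
    mem_ball_zero_iff.mpr (lt_trans (hmem x hx) hr1)
  have hmem1 : ∀ {x : ℂ}, ‖x‖ < r → ∀ {t : ℝ}, t ∈ Icc (0:ℝ) 1 → (t:ℂ) * x ∈ 𝔻 := by
    intro x hx t ht
    exact mem_ball_zero_iff.mpr (lt_trans (lt_of_le_of_lt (norm_smul_le' ht x) hx) hr1)
  have hmem2 : ∀ {x : ℂ}, ‖x‖ < r → ∀ {t : ℝ}, t ∈ Icc (0:ℝ) 1 → x - (t:ℂ) * x ∈ 𝔻 := by
    intro x hx t ht
    exact mem_ball_zero_iff.mpr (lt_trans (lt_of_le_of_lt (norm_sub_smul_le ht x) hx) hr1)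
  obtain ⟨M1, hM1⟩ := (isCompact_closedBall (0:ℂ) r).exists_bound_of_continuousOn
    (hf.continuousOn.mono hrD)
  obtain ⟨M2, hM2⟩ := (isCompact_closedBall (0:ℂ) r).exists_bound_of_continuousOn
    (hg.continuousOn.mono hrD)
  obtain ⟨M3, hM3⟩ := (isCompact_closedBall (0:ℂ) r).exists_bound_of_continuousOn
    (hf'.continuousOn.mono hrD)
  obtain ⟨M4, hM4⟩ := (isCompact_closedBall (0:ℂ) r).exists_bound_of_continuousOn
    (hg'.continuousOn.mono hrD)
  have h0r : (0:ℂ) ∈ Metric.closedBall (0:ℂ) r := mem_closedBall_self hr0.le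
  have hM1p : 0 ≤ M1 := le_trans (norm_nonneg _) (hM1 0 h0r)
  have hM2p : 0 ≤ M2 := le_trans (norm_nonneg _) (hM2 0 h0r)
  have hM3p : 0 ≤ M3 := le_trans (norm_nonneg _) (hM3 0 h0r)
  have hM4p : 0 ≤ M4 := le_trans (norm_nonneg _) (hM4 0 h0r)
  have hcb : ∀ {x : ℂ}, ‖x‖ < r → ∀ {t : ℝ}, t ∈ Icc (0:ℝ) 1 →
      (t:ℂ) * x ∈ Metric.closedBall (0:ℂ) r ∧ x - (t:ℂ) * x ∈ Metric.closedBall (0:ℂ) r := by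
    intro x hx t ht
    constructor
    · exact mem_closedBall_zero_iff.mpr (le_trans (norm_smul_le' ht x) hx.le)
    · exact mem_closedBall_zero_iff.mpr (le_trans (norm_sub_smul_le ht x) hx.le)
  set F : ℂ → ℝ → ℂ := fun x t => f (x - (t:ℂ) * x) * g ((t:ℂ) * x) with hF
  set F' : ℂ → ℝ → ℂ := fun x t =>
    deriv f (x - (t:ℂ) * x) * (1 - (t:ℂ)) * g ((t:ℂ) * x)
      + f (x - (t:ℂ) * x) * (deriv g ((t:ℂ) * x) * (t:ℂ)) with hF'
  have hIoc : Set.uIoc (0:ℝ) 1 = Set.Ioc (0:ℝ) 1 := Set.uIoc_of_le zero_le_one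
  have hIcc : Set.uIcc (0:ℝ) 1 = Set.Icc (0:ℝ) 1 := Set.uIcc_of_le zero_le_one
  have hFcont : ∀ {x : ℂ}, x ∈ 𝔻 → ContinuousOn (F x) (Icc (0:ℝ) 1) := by
    intro x hx
    exact (contOn_sub_smul hf.continuousOn hx).mul (contOn_smul hg.continuousOn hx)
  have hF'cont : ∀ {x : ℂ}, x ∈ 𝔻 → ContinuousOn (F' x) (Icc (0:ℝ) 1) := by
    intro x hx
    apply ContinuousOn.add
    · exact ((contOn_sub_smul hf'.continuousOn hx).mul
        ((by continuity : Continuous (fun t : ℝ => 1 - (t:ℂ))).continuousOn)).mul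
        (contOn_smul hg.continuousOn hx)
    · exact (contOn_sub_smul hf.continuousOn hx).mul
        ((contOn_smul hg'.continuousOn hx).mul
          (Complex.continuous_ofReal.continuousOn))
  have hmeas : ∀ᶠ x in nhds z₀, MeasureTheory.AEStronglyMeasurable (F x)
      (MeasureTheory.volume.restrict (Set.uIoc (0:ℝ) 1)) := by
    filter_upwards [Metric.ball_mem_nhds z₀ hε] with x hx
    rw [hIoc]
    exact ((hFcont (hmemD x hx)).mono Set.Ioc_subset_Icc_self).aestronglyMeasurable
      measurableSet_Ioc
  have hint : IntervalIntegrable (F z₀) MeasureTheory.volume 0 1 := by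
    apply ContinuousOn.intervalIntegrable
    rw [hIcc]; exact hFcont hz₀
  have hmeas' : MeasureTheory.AEStronglyMeasurable (F' z₀)
      (MeasureTheory.volume.restrict (Set.uIoc (0:ℝ) 1)) := by
    rw [hIoc]
    exact ((hF'cont hz₀).mono Set.Ioc_subset_Icc_self).aestronglyMeasurable measurableSet_Ioc
  have hbound : ∀ᵐ t ∂MeasureTheory.volume, t ∈ Set.uIoc (0:ℝ) 1 →
      ∀ x ∈ Metric.ball z₀ ε, ‖F' x t‖ ≤ M3 * M2 + M1 * M4 := by
    apply MeasureTheory.ae_of_all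
    intro t ht x hx
    rw [hIoc] at ht
    have ht' : t ∈ Icc (0:ℝ) 1 := ⟨ht.1.le, ht.2⟩
    have hxr := hmem x hx
    obtain ⟨hc1, hc2⟩ := hcb hxr ht'
    have e1 : ‖deriv f (x - (t:ℂ) * x)‖ ≤ M3 := hM3 _ hc2
    have e2 : ‖g ((t:ℂ) * x)‖ ≤ M2 := hM2 _ hc1
    have e3 : ‖f (x - (t:ℂ) * x)‖ ≤ M1 := hM1 _ hc2
    have e4 : ‖deriv g ((t:ℂ) * x)‖ ≤ M4 := hM4 _ hc1
    have e5 : ‖(1 - (t:ℂ))‖ ≤ 1 := by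
      have h : (1:ℂ) - (t:ℂ) = ((1 - t : ℝ) : ℂ) := by push_cast; ring
      rw [h, Complex.norm_real, Real.norm_eq_abs, _root_.abs_of_nonneg (by linarith [ht'.2])]
      linarith [ht'.1]
    have e6 : ‖(t:ℂ)‖ ≤ 1 := by
      rw [Complex.norm_real, Real.norm_eq_abs, _root_.abs_of_nonneg ht'.1]; exact ht'.2
    calc ‖F' x t‖ ≤ ‖deriv f (x - (t:ℂ) * x) * (1 - (t:ℂ)) * g ((t:ℂ) * x)‖
        + ‖f (x - (t:ℂ) * x) * (deriv g ((t:ℂ) * x) * (t:ℂ))‖ := norm_add_le _ _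
    _ = ‖deriv f (x - (t:ℂ) * x)‖ * ‖(1 - (t:ℂ))‖ * ‖g ((t:ℂ) * x)‖
        + ‖f (x - (t:ℂ) * x)‖ * (‖deriv g ((t:ℂ) * x)‖ * ‖(t:ℂ)‖) := by
        simp [norm_mul]
    _ ≤ M3 * M2 + M1 * M4 := by
        have b1 : ‖deriv f (x - (t:ℂ) * x)‖ * ‖(1 - (t:ℂ))‖ * ‖g ((t:ℂ) * x)‖ ≤ M3 * M2 := by
          calc ‖deriv f (x - (t:ℂ) * x)‖ * ‖(1 - (t:ℂ))‖ * ‖g ((t:ℂ) * x)‖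
              ≤ M3 * 1 * M2 := by
                apply mul_le_mul _ e2 (norm_nonneg _) (by positivity)
                exact mul_le_mul e1 e5 (norm_nonneg _) hM3p
          _ = M3 * M2 := by ring
        have b2 : ‖f (x - (t:ℂ) * x)‖ * (‖deriv g ((t:ℂ) * x)‖ * ‖(t:ℂ)‖) ≤ M1 * M4 := by
          calc ‖f (x - (t:ℂ) * x)‖ * (‖deriv g ((t:ℂ) * x)‖ * ‖(t:ℂ)‖)
              ≤ M1 * (M4 * 1) := by
                apply mul_le_mul e3 _ (by positivity) hM1p
                exact mul_le_mul e4 e6 (norm_nonneg _) hM4p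
          _ = M1 * M4 := by ring
        linarith
  have hbint : IntervalIntegrable (fun _ : ℝ => M3 * M2 + M1 * M4)
      MeasureTheory.volume 0 1 := intervalIntegrable_const
  have hdiff : ∀ᵐ t ∂MeasureTheory.volume, t ∈ Set.uIoc (0:ℝ) 1 →
      ∀ x ∈ Metric.ball z₀ ε, HasDerivAt (fun x => F x t) (F' x t) x := by
    apply MeasureTheory.ae_of_all
    intro t ht x hx
    rw [hIoc] at ht
    have ht' : t ∈ Icc (0:ℝ) 1 := ⟨ht.1.le, ht.2⟩
    have hxr := hmem x hx
    have hu₁ : HasDerivAt (fun x : ℂ => x - (t:ℂ) * x) (1 - (t:ℂ)) x := by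
      simpa using (hasDerivAt_id x).fun_sub ((hasDerivAt_id x).const_mul (t:ℂ))
    have hu₂ : HasDerivAt (fun x : ℂ => (t:ℂ) * x) ((t:ℂ)) x := by
      simpa using (hasDerivAt_id x).const_mul (t:ℂ)
    have hfd : HasDerivAt f (deriv f (x - (t:ℂ) * x)) (x - (t:ℂ) * x) :=
      ((hf _ (hmem2 hxr ht')).differentiableAt).hasDerivAt
    have hgd : HasDerivAt g (deriv g ((t:ℂ) * x)) ((t:ℂ) * x) :=
      ((hg _ (hmem1 hxr ht')).differentiableAt).hasDerivAt
    exact (hfd.comp x hu₁).mul (hgd.comp x hu₂)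
  obtain ⟨-, hI⟩ := intervalIntegral.hasDerivAt_integral_of_dominated_loc_of_deriv_le
    (Metric.ball_mem_nhds z₀ hε) hmeas hint hmeas' hbound hbint hdiff
  have hprod : HasDerivAt (fun x => x * ∫ t in (0:ℝ)..1, F x t)
      (1 * (∫ t in (0:ℝ)..1, F z₀ t) + z₀ * ∫ t in (0:ℝ)..1, F' z₀ t) z₀ :=
    (hasDerivAt_id z₀).mul hI
  set A : ℝ → ℂ := fun t => deriv f (z₀ - (t:ℂ) * z₀) * g ((t:ℂ) * z₀) with hA
  set u : ℝ → ℂ := fun t => (t:ℂ) * (f (z₀ - (t:ℂ) * z₀) * g ((t:ℂ) * z₀)) with hu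
  set u' : ℝ → ℂ := fun t =>
    f (z₀ - (t:ℂ) * z₀) * g ((t:ℂ) * z₀)
      + (t:ℂ) * ((-z₀) * deriv f (z₀ - (t:ℂ) * z₀) * g ((t:ℂ) * z₀)
        + f (z₀ - (t:ℂ) * z₀) * (z₀ * deriv g ((t:ℂ) * z₀))) with hu'
  have hud : ∀ t ∈ Set.uIcc (0:ℝ) 1, HasDerivAt u (u' t) t := by
    intro t ht
    rw [hIcc] at ht
    have h1 : HasDerivAt (fun t : ℝ => ((t:ℝ):ℂ)) 1 t := (hasDerivAt_id t).ofReal_comp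
    have hw1 : HasDerivAt (fun t : ℝ => z₀ - (t:ℂ) * z₀) (-z₀) t := by
      simpa using (hasDerivAt_const t z₀).fun_sub (h1.mul_const z₀)
    have hw2 : HasDerivAt (fun t : ℝ => (t:ℂ) * z₀) z₀ t := by
      simpa using h1.mul_const z₀
    have hfd : HasDerivAt f (deriv f (z₀ - (t:ℂ) * z₀)) (z₀ - (t:ℂ) * z₀) :=
      ((hf _ (hmem2 hz₀r ht)).differentiableAt).hasDerivAt
    have hgd : HasDerivAt g (deriv g ((t:ℂ) * z₀)) ((t:ℂ) * z₀) :=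
      ((hg _ (hmem1 hz₀r ht)).differentiableAt).hasDerivAt
    have hc1 : HasDerivAt (fun t : ℝ => f (z₀ - (t:ℂ) * z₀))
        ((-z₀) • deriv f (z₀ - (t:ℂ) * z₀)) t := hfd.scomp t hw1
    have hc2 : HasDerivAt (fun t : ℝ => g ((t:ℂ) * z₀))
        (z₀ • deriv g ((t:ℂ) * z₀)) t := hgd.scomp t hw2
    have hmain := h1.fun_mul (hc1.fun_mul hc2)
    convert hmain using 1
    · rfl
    simp only [hu', smul_eq_mul]
    ring
  have hu'cont : ContinuousOn u' (Icc (0:ℝ) 1) := by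
    apply ContinuousOn.add
    · exact (contOn_sub_smul hf.continuousOn hz₀).mul (contOn_smul hg.continuousOn hz₀)
    · apply ContinuousOn.mul Complex.continuous_ofReal.continuousOn
      apply ContinuousOn.add
      · exact ((continuousOn_const.mul
          (contOn_sub_smul hf'.continuousOn hz₀)).mul (contOn_smul hg.continuousOn hz₀))
      · exact (contOn_sub_smul hf.continuousOn hz₀).mul
          (continuousOn_const.mul (contOn_smul hg'.continuousOn hz₀))
  have hu'int : IntervalIntegrable u' MeasureTheory.volume 0 1 := by
    apply ContinuousOn.intervalIntegrable; rw [hIcc]; exact hu'cont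
  have hFTC : (∫ t in (0:ℝ)..1, u' t) = f 0 * g z₀ := by
    rw [intervalIntegral.integral_eq_sub_of_hasDerivAt hud hu'int]
    simp [hu]
  have hAint : IntervalIntegrable A MeasureTheory.volume 0 1 := by
    apply ContinuousOn.intervalIntegrable; rw [hIcc]
    exact (contOn_sub_smul hf'.continuousOn hz₀).mul (contOn_smul hg.continuousOn hz₀)
  have hFint : IntervalIntegrable (F z₀) MeasureTheory.volume 0 1 := by
    apply ContinuousOn.intervalIntegrable; rw [hIcc]; exact hFcont hz₀
  have hF'int : IntervalIntegrable (F' z₀) MeasureTheory.volume 0 1 := by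
    apply ContinuousOn.intervalIntegrable; rw [hIcc]; exact hF'cont hz₀
  have hkey : f 0 * g z₀ + conv (deriv f) g z₀
      = 1 * (∫ t in (0:ℝ)..1, F z₀ t) + z₀ * ∫ t in (0:ℝ)..1, F' z₀ t := by
    have e1 : conv (deriv f) g z₀ = z₀ * ∫ t in (0:ℝ)..1, A t := rfl
    rw [e1, ← hFTC]
    rw [← intervalIntegral.integral_const_mul z₀ A, ← intervalIntegral.integral_add hu'int
      (hAint.const_mul z₀)]
    rw [← intervalIntegral.integral_const_mul z₀ (F' z₀), one_mul,
      ← intervalIntegral.integral_add hFint (hF'int.const_mul z₀)]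
    apply intervalIntegral.integral_congr
    intro t _
    simp only [hu', hA, hF, hF']
    ring
  rw [hkey]
  exact hprod

lemma conv_analytic {f g : ℂ → ℂ} (hf : AnalyticOnNhd ℂ f 𝔻) (hg : AnalyticOnNhd ℂ g 𝔻) :
    AnalyticOnNhd ℂ (conv f g) 𝔻 := by
  apply DifferentiableOn.analyticOnNhd _ Metric.isOpen_ball
  intro z hz
  exact (conv_hasDerivAt hf hg hz).differentiableAt.differentiableWithinAt

lemma conv_deriv_ev {f g : ℂ → ℂ} (hf : AnalyticOnNhd ℂ f 𝔻) (hg : AnalyticOnNhd ℂ g 𝔻) :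
    deriv (conv f g) =ᶠ[nhds 0] fun z => f 0 * g z + conv (deriv f) g z := by
  apply Filter.eventuallyEq_of_mem (Metric.isOpen_ball.mem_nhds h0D)
  intro z hz
  exact (conv_hasDerivAt hf hg hz).deriv

lemma iteratedDeriv_add_at0 : ∀ (n : ℕ) {u v : ℂ → ℂ},
    AnalyticOnNhd ℂ u 𝔻 → AnalyticOnNhd ℂ v 𝔻 →
    iteratedDeriv n (fun z => u z + v z) 0 = iteratedDeriv n u 0 + iteratedDeriv n v 0 := by
  intro n
  induction n with
  | zero => intro u v _ _; simp
  | succ n ih =>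
    intro u v hu hv
    rw [iteratedDeriv_succ', iteratedDeriv_succ' (f := u), iteratedDeriv_succ' (f := v)]
    have hev : deriv (fun z => u z + v z) =ᶠ[nhds 0] fun z => deriv u z + deriv v z := by
      apply Filter.eventuallyEq_of_mem (Metric.isOpen_ball.mem_nhds h0D)
      intro z hz
      exact deriv_add ((hu z hz).differentiableAt) ((hv z hz).differentiableAt)
    rw [hev.iteratedDeriv_eq n]
    exact ih hu.deriv hv.deriv

lemma iteratedDeriv_cmul_at0 : ∀ (n : ℕ) (c : ℂ) {v : ℂ → ℂ},
    AnalyticOnNhd ℂ v 𝔻 →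
    iteratedDeriv n (fun z => c * v z) 0 = c * iteratedDeriv n v 0 := by
  intro n
  induction n with
  | zero => intro c v _; simp
  | succ n ih =>
    intro c v hv
    rw [iteratedDeriv_succ', iteratedDeriv_succ' (f := v)]
    have hev : deriv (fun z => c * v z) =ᶠ[nhds 0] fun z => c * deriv v z := by
      apply Filter.eventuallyEq_of_mem (Metric.isOpen_ball.mem_nhds h0D)
      intro z hz
      exact deriv_const_mul c ((hv z hz).differentiableAt)
    rw [hev.iteratedDeriv_eq n]
    exact ih c hv.deriv

/-- Leibniz rule at `0` for analytic functions on the disc. -/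
lemma iteratedDeriv_mul_at0 : ∀ (n : ℕ) {u v : ℂ → ℂ},
    AnalyticOnNhd ℂ u 𝔻 → AnalyticOnNhd ℂ v 𝔻 →
    iteratedDeriv n (fun z => u z * v z) 0
      = ∑ i ∈ Finset.range (n+1),
          (n.choose i : ℂ) * iteratedDeriv i u 0 * iteratedDeriv (n-i) v 0 := by
  intro n
  induction n with
  | zero => intro u v _ _; simp
  | succ n ih =>
    intro u v hu hv
    rw [iteratedDeriv_succ']
    have hev : deriv (fun z => u z * v z) =ᶠ[nhds 0]
        fun z => deriv u z * v z + u z * deriv v z := by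
      apply Filter.eventuallyEq_of_mem (Metric.isOpen_ball.mem_nhds h0D)
      intro z hz
      exact deriv_mul ((hu z hz).differentiableAt) ((hv z hz).differentiableAt)
    rw [hev.iteratedDeriv_eq n,
      iteratedDeriv_add_at0 n (hu.deriv.mul hv) (hu.mul hv.deriv),
      ih hu.deriv hv, ih hu hv.deriv]
    have hud : ∀ i, iteratedDeriv i (deriv u) 0 = iteratedDeriv (i+1) u 0 := by
      intro i; rw [iteratedDeriv_succ']
    have hvd : ∀ i, iteratedDeriv i (deriv v) 0 = iteratedDeriv (i+1) v 0 := by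
      intro i; rw [iteratedDeriv_succ']
    simp only [hud, hvd]
    rw [Finset.sum_range_succ' (fun i =>
      ((n+1).choose i : ℂ) * iteratedDeriv i u 0 * iteratedDeriv (n+1-i) v 0) (n+1)]
    have step1 : ∀ i ∈ Finset.range (n+1),
        (((n+1).choose (i+1) : ℕ) : ℂ) * iteratedDeriv (i+1) u 0 * iteratedDeriv (n+1-(i+1)) v 0
          = (n.choose i : ℂ) * iteratedDeriv (i+1) u 0 * iteratedDeriv (n-i) v 0
            + (n.choose (i+1) : ℂ) * iteratedDeriv (i+1) u 0 * iteratedDeriv (n-i) v 0 := by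
      intro i _
      rw [Nat.succ_sub_succ, Nat.choose_succ_succ]
      push_cast
      ring
    rw [Finset.sum_congr rfl step1, Finset.sum_add_distrib]
    have step2 : ∑ i ∈ Finset.range (n+1),
        (n.choose i : ℂ) * iteratedDeriv i u 0 * iteratedDeriv (n-i+1) v 0
        = ∑ i ∈ Finset.range n,
            (n.choose (i+1) : ℂ) * iteratedDeriv (i+1) u 0 * iteratedDeriv (n-i) v 0
          + iteratedDeriv 0 u 0 * iteratedDeriv (n+1) v 0 := by
      rw [Finset.sum_range_succ' (fun i =>
        (n.choose i : ℂ) * iteratedDeriv i u 0 * iteratedDeriv (n-i+1) v 0) n]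
      congr 1
      · apply Finset.sum_congr rfl
        intro i hi
        have h : n - (i+1) + 1 = n - i := by
          rw [Finset.mem_range] at hi; omega
        rw [h]
      · simp
    rw [step2]
    have step3 : ∑ i ∈ Finset.range (n+1),
        (n.choose (i+1) : ℂ) * iteratedDeriv (i+1) u 0 * iteratedDeriv (n-i) v 0
        = ∑ i ∈ Finset.range n,
            (n.choose (i+1) : ℂ) * iteratedDeriv (i+1) u 0 * iteratedDeriv (n-i) v 0 := by
      rw [Finset.sum_range_succ, Nat.choose_succ_self]
      simp
    rw [step3]
    simp only [Nat.choose_zero_right, Nat.cast_one, one_mul, Nat.sub_zero]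
    ring

/-- Iterated derivatives at `0` of the convolution. -/
lemma conv_iteratedDeriv : ∀ (k : ℕ) (f g : ℂ → ℂ),
    AnalyticOnNhd ℂ f 𝔻 → AnalyticOnNhd ℂ g 𝔻 →
    iteratedDeriv (k+1) (conv f g) 0
      = ∑ i ∈ Finset.range (k+1), iteratedDeriv i f 0 * iteratedDeriv (k-i) g 0 := by
  intro k
  induction k with
  | zero =>
    intro f g hf hg
    rw [iteratedDeriv_succ', (conv_deriv_ev hf hg).iteratedDeriv_eq 0]
    simp [iteratedDeriv_zero, conv_zero]
  | succ k ih =>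
    intro f g hf hg
    rw [iteratedDeriv_succ' (n := k+1), (conv_deriv_ev hf hg).iteratedDeriv_eq (k+1)]
    rw [iteratedDeriv_add_at0 (k+1) (analyticOnNhd_const.mul hg)
      (conv_analytic hf.deriv hg)]
    rw [iteratedDeriv_cmul_at0 (k+1) (f 0) hg, ih (deriv f) g hf.deriv hg]
    rw [Finset.sum_range_succ' (fun i => iteratedDeriv i f 0 * iteratedDeriv (k+1-i) g 0) (k+1)]
    have hud : ∀ i, iteratedDeriv i (deriv f) 0 = iteratedDeriv (i+1) f 0 := by
      intro i; rw [iteratedDeriv_succ']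
    simp only [hud, Nat.succ_sub_succ, iteratedDeriv_zero, Nat.sub_zero]
    ring

/-- The combinatorial lemma: the coefficient relations force linearity. -/
lemma coeff_vanish (b : ℕ → ℂ) (hb0 : b 0 = 0)
    (H : ∀ k : ℕ, ∑ i ∈ Finset.range (k+2),
      (((k+1).choose i : ℂ) - 2) * b i * b (k+1-i) = 0) :
    ∀ n, 2 ≤ n → b n = 0 := by
  by_cases hb1 : b 1 = 0
  · intro n
    induction n using Nat.strong_induction_on with
    | _ n IH =>
      intro hn2
      have hk := H (2*n - 1)
      have h2n : 2*n - 1 + 1 = 2*n := by omega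
      have h2n2 : 2*n - 1 + 2 = 2*n + 1 := by omega
      rw [h2n, h2n2] at hk
      have hsingle : ∀ i ∈ Finset.range (2*n+1), i ≠ n →
          (((2*n).choose i : ℂ) - 2) * b i * b (2*n-i) = 0 := by
        intro i hi hin
        rw [Finset.mem_range] at hi
        have hsmall : ∀ m, m < n → b m = 0 := by
          intro m hm
          match m, hm with
          | 0, _ => exact hb0
          | 1, _ => exact hb1
          | (m+2), hm => exact IH (m+2) hm (by omega)
        rcases lt_or_gt_of_ne hin with h | h
        · rw [hsmall i h]; ring
        · rw [hsmall (2*n - i) (by omega)]; ring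
      rw [Finset.sum_eq_single_of_mem n (by rw [Finset.mem_range]; omega) hsingle] at hk
      have hnn : 2*n - n = n := by omega
      rw [hnn] at hk
      have h4 : 4 ≤ (2*n).choose n := by
        have h1 := Nat.choose_le_middle 1 (2*n)
        have h2 : (2*n)/2 = n := by omega
        rw [h2, Nat.choose_one_right] at h1
        omega
      have hC : (((2*n).choose n : ℂ) - 2) ≠ 0 := by
        intro hc
        rw [sub_eq_zero] at hc
        have h5 : ((2*n).choose n : ℂ) = ((2:ℕ) : ℂ) := by rw [hc]; norm_num
        have := Nat.cast_inj.mp h5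
        omega
      have := mul_eq_zero.mp hk
      rcases this with h | h
      · rcases mul_eq_zero.mp h with h' | h'
        · exact absurd h' hC
        · exact h'
      · exact h
  · intro n
    induction n using Nat.strong_induction_on with
    | _ n IH =>
      intro hn2
      have hk := H n
      have hsub : ({1, n} : Finset ℕ) ⊆ Finset.range (n+2) := by
        intro x hx
        rw [Finset.mem_insert, Finset.mem_singleton] at hx
        rw [Finset.mem_range]
        rcases hx with rfl | rfl <;> omega
      have hvan : ∀ i ∈ Finset.range (n+2), i ∉ ({1, n} : Finset ℕ) →
          (((n+1).choose i : ℂ) - 2) * b i * b (n+1-i) = 0 := by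
        intro i hi hnot
        rw [Finset.mem_range] at hi
        rw [Finset.mem_insert, Finset.mem_singleton] at hnot
        push_neg at hnot
        obtain ⟨hi1, hin⟩ := hnot
        by_cases h0 : i = 0
        · subst h0; rw [hb0]; ring
        · by_cases htop : n+1 ≤ i
          · have he : n+1-i = 0 := by omega
            rw [he, hb0]; ring
          · have hbi : b i = 0 := IH i (by omega) (by omega)
            rw [hbi]; ring
      rw [← Finset.sum_subset hsub hvan] at hk
      rw [Finset.sum_pair (by omega : (1:ℕ) ≠ n)] at hk
      have e1 : n + 1 - 1 = n := by omega
      have e2 : n + 1 - n = 1 := by omega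
      rw [e1, e2, Nat.choose_one_right, Nat.choose_succ_self_right] at hk
      have hfac : ((n:ℂ) + 1 - 2) * (b 1 * b n) * 2 = 0 := by
        push_cast at hk ⊢
        linear_combination hk
      have hne : ((n:ℂ) + 1 - 2) ≠ 0 := by
        intro hc
        have h5 : ((n:ℕ) : ℂ) = ((1:ℕ) : ℂ) := by push_cast; linear_combination hc
        have := Nat.cast_inj.mp h5
        omega
      rcases mul_eq_zero.mp hfac with h | h
      · rcases mul_eq_zero.mp h with h' | h'
        · exact absurd h' hne
        · rcases mul_eq_zero.mp h' with h'' | h''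
          · exact absurd h'' hb1
          · exact h''
      · exact absurd h two_ne_zero

end DuhamelAux

open DuhamelAux Metric

/-- If `X` is a Banach algebra of analytic functions on `𝔻` under the
Duhamel product containing the identity function `z`, `φ` is an analytic self-map of
`𝔻`, and `C_φ` is bounded on `X`, then `C_φ` is Duhamel multiplicative iff
`φ(z) = az` for some `|a| ≤ 1`. -/
theorem composition_duhamel_multiplicative_iff
    (X : Set (ℂ → ℂ)) (N : (ℂ → ℂ) → ℝ)
    (hX : ∀ f ∈ X, DifferentiableOn ℂ f (Metric.ball 0 1))
    (hXmul : ∀ f ∈ X, ∀ g ∈ X, duhamel f g ∈ X)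
    (hNsubmul : ∀ f ∈ X, ∀ g ∈ X, N (duhamel f g) ≤ N f * N g)
    (hid : (fun z : ℂ => z) ∈ X)
    (φ : ℂ → ℂ)
    (hφan : DifferentiableOn ℂ φ (Metric.ball 0 1))
    (hφself : Set.MapsTo φ (Metric.ball 0 1) (Metric.ball 0 1))
    (hCφX : ∀ f ∈ X, (f ∘ φ) ∈ X)
    (hCφbdd : ∃ C : ℝ, ∀ f ∈ X, N (f ∘ φ) ≤ C * N f) :
    (∀ f ∈ X, ∀ g ∈ X,
      Set.EqOn ((duhamel f g) ∘ φ) (duhamel (f ∘ φ) (g ∘ φ)) (Metric.ball (0:ℂ) 1)) ↔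
    (∃ a : ℂ, ‖a‖ ≤ 1 ∧ ∀ z ∈ Metric.ball (0:ℂ) 1, φ z = a * z) := by
  constructor
  · -- forward direction
    intro h
    have hφa : AnalyticOnNhd ℂ φ (Metric.ball 0 1) := hφan.analyticOnNhd Metric.isOpen_ball
    have h1 := h _ hid _ hid
    have hcomp : ((fun z : ℂ => z) ∘ φ) = φ := rfl
    rw [hcomp] at h1
    have hdi : ∀ w : ℂ, duhamel (fun z => z) (fun z => z) w = w * w / 2 := by
      intro w
      simp only [duhamel, deriv_id'', one_mul]
      rw [intervalIntegral.integral_mul_const]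
      have : (∫ s in (0:ℝ)..1, ((s:ℝ):ℂ)) = (((1:ℝ)^2 - (0:ℝ)^2)/2 : ℝ) := by
        rw [intervalIntegral.integral_ofReal, integral_id]
      rw [this]
      push_cast
      ring
    have key0 : ∀ z ∈ Metric.ball (0:ℂ) 1, φ z * φ z / 2
        = conv (deriv φ) φ z + φ 0 * φ z := by
      intro z hz
      have h2 := h1 hz
      simp only [Function.comp_apply] at h2
      rw [hdi (φ z)] at h2
      rw [h2, duhamel_eq]
    have hφ0 : φ 0 = 0 := by
      have h2 := key0 0 h0D
      rw [conv_zero] at h2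
      have h3 : φ 0 * φ 0 = 0 := by linear_combination (-2 : ℂ) * h2
      exact mul_self_eq_zero.mp h3
    have hEv : (fun z => φ z * φ z) =ᶠ[nhds 0]
        (fun z => 2 * conv (deriv φ) φ z) := by
      apply Filter.eventuallyEq_of_mem (Metric.isOpen_ball.mem_nhds h0D)
      intro z hz
      have h2 := key0 z hz
      rw [hφ0] at h2
      simp only
      linear_combination (2:ℂ) * h2
    set b : ℕ → ℂ := fun n => iteratedDeriv n φ 0 with hbdef
    have hb0 : b 0 = 0 := by simp [hbdef, iteratedDeriv_zero, hφ0]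
    have hconva : AnalyticOnNhd ℂ (conv (deriv φ) φ) (Metric.ball 0 1) :=
      conv_analytic hφa.deriv hφa
    have H : ∀ k : ℕ, ∑ i ∈ Finset.range (k+2),
        (((k+1).choose i : ℂ) - 2) * b i * b (k+1-i) = 0 := by
      intro k
      have L := iteratedDeriv_mul_at0 (k+1) hφa hφa
      have hLR := hEv.iteratedDeriv_eq (k+1)
      have R : iteratedDeriv (k+1) (fun z => 2 * conv (deriv φ) φ z) 0
          = 2 * ∑ i ∈ Finset.range (k+1), b (i+1) * b (k-i) := by
        rw [iteratedDeriv_cmul_at0 (k+1) 2 hconva,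
          conv_iteratedDeriv k (deriv φ) φ hφa.deriv hφa]
        congr 1
        apply Finset.sum_congr rfl
        intro i _
        simp only [hbdef]
        simp only [iteratedDeriv_succ']
      have hCsum : ∑ i ∈ Finset.range (k+2), ((k+1).choose i : ℂ) * b i * b (k+1-i)
          = 2 * ∑ i ∈ Finset.range (k+1), b (i+1) * b (k-i) := by
        rw [← L, hLR, R]
      have hsum : ∑ i ∈ Finset.range (k+2), b i * b (k+1-i)
          = ∑ i ∈ Finset.range (k+1), b (i+1) * b (k-i) := by
        rw [Finset.sum_range_succ' (fun i => b i * b (k+1-i)) (k+1)]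
        simp [hb0, Nat.succ_sub_succ]
      calc ∑ i ∈ Finset.range (k+2), (((k+1).choose i : ℂ) - 2) * b i * b (k+1-i)
          = (∑ i ∈ Finset.range (k+2), ((k+1).choose i : ℂ) * b i * b (k+1-i))
            - 2 * ∑ i ∈ Finset.range (k+2), b i * b (k+1-i) := by
            rw [Finset.mul_sum, ← Finset.sum_sub_distrib]
            apply Finset.sum_congr rfl
            intro i _
            ring
      _ = 0 := by rw [hCsum, hsum]; ring
    have hvan := coeff_vanish b hb0 H
    obtain ⟨p, hp⟩ := hφa 0 h0D
    obtain ⟨R, hR⟩ := hp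
    have hcoeff : ∀ n, ((Nat.factorial n : ℕ) : ℂ) * p.coeff n = b n := by
      intro n
      have h1 := hR.factorial_smul (1:ℂ) n
      rw [hbdef]
      simp only [iteratedDeriv_eq_iteratedFDeriv]
      rw [← h1, nsmul_eq_mul]
      rfl
    set a : ℂ := deriv φ 0 with hadef
    have hb1a : b 1 = a := by simp [hbdef, iteratedDeriv_one, hadef]
    have hc1 : p.coeff 1 = a := by
      have h2 := hcoeff 1
      rw [hb1a] at h2
      simpa using h2
    have hc0 : p.coeff 0 = 0 := by
      have h2 := hcoeff 0
      rw [hb0] at h2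
      simpa using h2
    have hcn : ∀ n, 2 ≤ n → p.coeff n = 0 := by
      intro n hn
      have h2 := hcoeff n
      rw [hvan n hn] at h2
      rcases mul_eq_zero.mp h2 with h' | h'
      · exact absurd h' (Nat.cast_ne_zero.mpr (Nat.factorial_ne_zero n))
      · exact h'
    have hev2 : Set.EqOn φ (fun z => a * z) (Metric.eball (0:ℂ) R) := by
      intro y hy
      have hsum0 := hR.hasSum (y := y) (by simpa using hy)
      have h2 : HasSum (fun n => p n fun _ => y) (a * y) := by
        have hz : ∀ n, n ≠ 1 → (p n fun _ => y) = 0 := by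
          intro n hn
          rw [FormalMultilinearSeries.apply_eq_pow_smul_coeff]
          rcases n with _ | _ | m
          · simp [hc0]
          · exact absurd rfl hn
          · simp [hcn (m+2) (by omega)]
        have h3 := hasSum_single (f := fun n => p n fun _ => y) 1 (fun n hn => hz n hn)
        have h4 : ((p 1) fun _ => y) = a * y := by
          rw [FormalMultilinearSeries.apply_eq_pow_smul_coeff, hc1]
          simp [smul_eq_mul, mul_comm]
        simpa [h4] using h3
      have h4 := hsum0.unique h2
      simpa using h4
    have hfin : Set.EqOn φ (fun z => a * z) (Metric.ball (0:ℂ) 1) := by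
      apply AnalyticOnNhd.eqOn_of_preconnected_of_eventuallyEq hφa
        ((differentiable_id.const_mul a).differentiableOn.analyticOnNhd Metric.isOpen_ball)
        (convex_ball (0:ℂ) 1).isPreconnected h0D
      exact Filter.eventuallyEq_of_mem (Metric.eball_mem_nhds 0 hR.r_pos) hev2
    refine ⟨a, ?_, fun z hz => hfin hz⟩
    by_contra hgt
    push_neg at hgt
    have hapos : (0:ℝ) < ‖a‖ := lt_trans one_pos hgt
    set t : ℝ := (‖a‖)⁻¹ with htdef
    have ht1 : t < 1 := by
      rw [htdef]
      rw [inv_lt_one_iff₀]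
      right; exact hgt
    have htpos : 0 < t := inv_pos.mpr hapos
    have hz : ((t:ℝ):ℂ) ∈ Metric.ball (0:ℂ) 1 := by
      rw [mem_ball_zero_iff, Complex.norm_real, Real.norm_eq_abs, abs_of_pos htpos]
      exact ht1
    have h2 := hφself hz
    rw [hfin hz, mem_ball_zero_iff] at h2
    have h3 : ‖a * ((t:ℝ):ℂ)‖ = 1 := by
      rw [norm_mul, Complex.norm_real, Real.norm_eq_abs, abs_of_pos htpos, htdef]
      exact mul_inv_cancel₀ (ne_of_gt hapos)
    rw [h3] at h2
    exact lt_irrefl 1 h2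
  · -- reverse direction
    rintro ⟨a, ha, haz⟩ f hf g hg z hz
    have hφ0 : φ 0 = 0 := by simpa using haz 0 h0D
    have hamem : ∀ {w : ℂ}, w ∈ Metric.ball (0:ℂ) 1 → a * w ∈ Metric.ball (0:ℂ) 1 := by
      intro w hw
      rw [mem_ball_zero_iff] at hw ⊢
      calc ‖a * w‖ = ‖a‖ * ‖w‖ := norm_mul _ _
      _ ≤ 1 * ‖w‖ := by
          apply mul_le_mul_of_nonneg_right _ (norm_nonneg w)
          exact ha
      _ < 1 := by rwa [one_mul]
    have hIcc : Set.uIcc (0:ℝ) 1 = Set.Icc (0:ℝ) 1 := Set.uIcc_of_le zero_le_one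
    simp only [Function.comp_apply]
    rw [haz z hz]
    have hieq : Set.EqOn (fun s : ℝ => deriv (f ∘ φ) (z - s * z) * (g ∘ φ) (s * z))
        (fun s : ℝ => a * (deriv f (a * z - s * (a * z)) * g (s * (a * z))))
        (Set.uIcc (0:ℝ) 1) := by
      intro s hs
      rw [hIcc] at hs
      have hsz : ((s:ℝ):ℂ) * z ∈ Metric.ball (0:ℂ) 1 := by
        rw [mem_ball_zero_iff] at hz ⊢
        exact lt_of_le_of_lt (norm_smul_le' hs z) hz
      have hwz : z - ((s:ℝ):ℂ) * z ∈ Metric.ball (0:ℂ) 1 := by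
        rw [mem_ball_zero_iff] at hz ⊢
        exact lt_of_le_of_lt (norm_sub_smul_le hs z) hz
      have e1 : (g ∘ φ) (((s:ℝ):ℂ) * z) = g (a * (((s:ℝ):ℂ) * z)) := by
        simp [Function.comp_apply, haz _ hsz]
      have e2 : deriv (f ∘ φ) (z - ((s:ℝ):ℂ) * z)
          = deriv f (a * (z - ((s:ℝ):ℂ) * z)) * a := by
        have hev : (f ∘ φ) =ᶠ[nhds (z - ((s:ℝ):ℂ) * z)] fun x => f (a * x) := by
          apply Filter.eventuallyEq_of_mem (Metric.isOpen_ball.mem_nhds hwz)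
          intro x hx
          simp [Function.comp_apply, haz x hx]
        rw [hev.deriv_eq]
        have hfd : HasDerivAt f (deriv f (a * (z - ((s:ℝ):ℂ) * z)))
            (a * (z - ((s:ℝ):ℂ) * z)) :=
          ((hX f hf).differentiableAt
            (Metric.isOpen_ball.mem_nhds (hamem hwz))).hasDerivAt
        have hld : HasDerivAt (fun x : ℂ => a * x) a (z - ((s:ℝ):ℂ) * z) := by
          simpa using (hasDerivAt_id (z - ((s:ℝ):ℂ) * z)).const_mul a
        exact (hfd.comp _ hld).deriv
      simp only
      rw [e1, e2]
      have arg1 : a * (z - ((s:ℝ):ℂ) * z) = a * z - ((s:ℝ):ℂ) * (a * z) := by ring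
      have arg2 : a * (((s:ℝ):ℂ) * z) = ((s:ℝ):ℂ) * (a * z) := by ring
      rw [arg1, arg2]
      ring
    show duhamel f g (a * z) = duhamel (f ∘ φ) (g ∘ φ) z
    simp only [duhamel]
    rw [intervalIntegral.integral_congr hieq, intervalIntegral.integral_const_mul]
    have e3 : (g ∘ φ) z = g (a * z) := by simp [Function.comp_apply, haz z hz]
    have e4 : (f ∘ φ) 0 = f 0 := by simp [Function.comp_apply, hφ0]
    rw [e3, e4]
    ring
end
end
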